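/- arXiv:2008.08708 — 12 statements merged into one kernel-verified Lean document; each statement's English description precedes it below -/
import Mathlib

section
/- Let T be any candidate for an instance with S steps and let cnt be its counting run. Then for every chunk c and node n, cnt_S(c,n) equals the number of pairs (u, π) where (c,u) ∈ pre and π is a c-path in T from u to n all of whose steps are < S. Consequently, (c,n) ∈ V_S (the set-valued run) if and only if cnt_S(c,n) ≥ 1. -/
/-- The set-valued run of a candidate `T`: `V_0 = pre`,
`V_{s+1} = V_s ∪ {(c,n') : ∃ n, (c,n) ∈ V_s ∧ (c,n,n',s) ∈ T}`. -/
def stepRun {G P S : ℕ} (pre : Set (Fin G × Fin P))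
    (T : Finset (Fin G × Fin P × Fin P × Fin S)) : ℕ → Set (Fin G × Fin P)
  | 0 => pre
  | s + 1 =>
      stepRun pre T s ∪
        {q | ∃ n, (q.1, n) ∈ stepRun pre T s ∧ ∃ h : s < S, (q.1, n, q.2, ⟨s, h⟩) ∈ T}

/-- `IsCPath T c u v l` : `l` is a `c`-path in `T` from `u` to `v`, encoded as the
list of its sends `(source, destination, step)`, with strictly increasing steps.
The empty path is allowed exactly when `u = v`. -/
def IsCPath {G P S : ℕ} (T : Finset (Fin G × Fin P × Fin P × Fin S)) (c : Fin G) :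
    Fin P → Fin P → List (Fin P × Fin P × Fin S) → Prop
  | u, v, [] => u = v
  | u, v, e :: l =>
      u = e.1 ∧ (c, e.1, e.2.1, e.2.2) ∈ T ∧ (∀ f ∈ l, e.2.2 < f.2.2) ∧
        IsCPath T c e.2.1 v l

open Classical in
/-- The counting run of a candidate: `cnt_0(c,n) = 1` iff `(c,n) ∈ pre`, and
`cnt_{s+1}(c,n) = cnt_s(c,n) + Σ_{n' : (c,n',n,s) ∈ T} cnt_s(c,n')`. -/
noncomputable def cntRun {G P S : ℕ} (pre : Set (Fin G × Fin P))
    (T : Finset (Fin G × Fin P × Fin P × Fin S)) : ℕ → Fin G → Fin P → ℕ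
  | 0, c, n => if (c, n) ∈ pre then 1 else 0
  | s + 1, c, n =>
      cntRun pre T s c n +
        if h : s < S then
          ∑ n' : Fin P, if (c, n', n, ⟨s, h⟩) ∈ T then cntRun pre T s c n' else 0
        else 0

/-!
Both sides obey the same recursion in `s`. A path whose steps are all `< s + 1` either has all
its steps `< s`, or it is a path to some `w` with steps `< s` followed by one send `(c, w, n, s)`.
The two kinds are disjoint, and in the second the last send determines `w` and is cancellable,
so the number of rooted paths to `n` grows from step `s` to `s + 1` by exactly the sum over
`(c, w, n, s) ∈ T` of the numbers of rooted paths to `w`, which is the counting recursion.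
-/

open Finset

section

variable {G P S : ℕ} (T : Finset (Fin G × Fin P × Fin P × Fin S)) (c : Fin G)

def IsCPathBefore (s : ℕ) (u v : Fin P) (l : List (Fin P × Fin P × Fin S)) : Prop :=
  IsCPath T c u v l ∧ ∀ e ∈ l, (e.2.2 : ℕ) < s

theorem isCPath_append_singleton {u v : Fin P} (l : List (Fin P × Fin P × Fin S))
    (e : Fin P × Fin P × Fin S) :
    IsCPath T c u v (l ++ [e]) ↔
      IsCPath T c u e.1 l ∧ (c, e.1, e.2.1, e.2.2) ∈ T ∧ e.2.1 = v ∧ ∀ f ∈ l, f.2.2 < e.2.2 := by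
  induction l generalizing u with
  | nil => simp only [List.nil_append, IsCPath]; tauto
  | cons a l ih =>
    simp only [List.cons_append, IsCPath, ih, List.forall_mem_append, List.forall_mem_cons]
    tauto

theorem isCPathBefore_zero_iff {u v : Fin P} {l : List (Fin P × Fin P × Fin S)} :
    IsCPathBefore T c 0 u v l ↔ l = [] ∧ u = v := by
  cases l with
  | nil => simp [IsCPathBefore, IsCPath]
  | cons e l =>
    simp only [IsCPathBefore, reduceCtorEq, false_and, iff_false, not_and]
    exact fun _ h => Nat.not_lt_zero _ (h e List.mem_cons_self)

theorem isCPathBefore_succ_iff {s : ℕ} {u v : Fin P} {l : List (Fin P × Fin P × Fin S)} :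
    IsCPathBefore T c (s + 1) u v l ↔
      IsCPathBefore T c s u v l ∨
        ∃ (h : s < S) (w : Fin P) (l' : List (Fin P × Fin P × Fin S)),
          (c, w, v, ⟨s, h⟩) ∈ T ∧ IsCPathBefore T c s u w l' ∧ l = l' ++ [(w, v, ⟨s, h⟩)] := by
  constructor
  · rintro ⟨hpath, hlt⟩
    obtain rfl | ⟨l', e, rfl⟩ := l.eq_nil_or_concat
    · exact Or.inl ⟨hpath, by simp⟩
    rw [List.concat_eq_append] at hpath hlt ⊢
    obtain ⟨hpath', hT, rfl, hincr⟩ := (isCPath_append_singleton T c l' e).1 hpath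
    have hl' : ∀ f ∈ l', (f.2.2 : ℕ) < e.2.2 := fun f hf => hincr f hf
    rcases Nat.lt_succ_iff_lt_or_eq.1 (hlt e (by simp)) with he | he
    · refine Or.inl ⟨hpath, List.forall_mem_append.2 ⟨fun f hf => (hl' f hf).trans he, ?_⟩⟩
      simpa using he
    · subst he
      exact Or.inr ⟨e.2.2.isLt, e.1, l', hT, ⟨hpath', hl'⟩, rfl⟩
  · rintro (⟨hpath, hlt⟩ | ⟨h, w, l', hT, ⟨hpath, hlt⟩, rfl⟩)
    · exact ⟨hpath, fun e he => (hlt e he).trans (Nat.lt_succ_self s)⟩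
    · refine ⟨(isCPath_append_singleton T c l' _).2 ⟨hpath, hT, rfl, fun f hf => hlt f hf⟩,
        List.forall_mem_append.2 ⟨fun f hf => (hlt f hf).trans (Nat.lt_succ_self s), by simp⟩⟩

end

section

variable {G P S : ℕ} (pre : Set (Fin G × Fin P)) (T : Finset (Fin G × Fin P × Fin P × Fin S))

open Classical in
noncomputable def rootedPaths :
    ℕ → Fin G → Fin P → Finset (Fin P × List (Fin P × Fin P × Fin S))
  | 0, c, n => if (c, n) ∈ pre then {(n, [])} else ∅
  | s + 1, c, n =>
      rootedPaths s c n ∪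
        if h : s < S then
          (univ.filter fun w => (c, w, n, ⟨s, h⟩) ∈ T).biUnion fun w =>
            (rootedPaths s c w).image (Prod.map id (· ++ [(w, n, ⟨s, h⟩)]))
        else ∅

theorem mem_rootedPaths {s : ℕ} {c : Fin G} {n : Fin P}
    {q : Fin P × List (Fin P × Fin P × Fin S)} :
    q ∈ rootedPaths pre T s c n ↔ (c, q.1) ∈ pre ∧ IsCPathBefore T c s q.1 n q.2 := by
  induction s generalizing n q with
  | zero =>
    obtain ⟨u, l⟩ := q
    by_cases hn : (c, n) ∈ pre
    · simp only [rootedPaths, if_pos hn, mem_singleton, Prod.mk.injEq, isCPathBefore_zero_iff]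
      constructor
      · rintro ⟨rfl, rfl⟩
        exact ⟨hn, rfl, rfl⟩
      · rintro ⟨-, rfl, rfl⟩
        exact ⟨rfl, rfl⟩
    · simp only [rootedPaths, if_neg hn, notMem_empty, false_iff, not_and, isCPathBefore_zero_iff]
      intro hu _ hun
      exact hn (hun ▸ hu)
  | succ s ih =>
    rw [rootedPaths, mem_union, ih, isCPathBefore_succ_iff, and_or_left]
    refine or_congr Iff.rfl ?_
    split_ifs with h
    · obtain ⟨u, l⟩ := q
      simp only [mem_biUnion, mem_filter, mem_univ, true_and, mem_image, ih, Prod.exists,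
        Prod.map_apply, id_eq, Prod.mk.injEq, exists_prop_of_true h]
      constructor
      · rintro ⟨w, hT, u, l', ⟨hpre, hpath⟩, rfl, rfl⟩
        exact ⟨hpre, w, l', hT, hpath, rfl⟩
      · rintro ⟨hpre, w, l', hT, hpath, rfl⟩
        exact ⟨w, hT, u, l', ⟨hpre, hpath⟩, rfl, rfl⟩
    · simp [h]

theorem append_notMem_rootedPaths {s : ℕ} (h : s < S) {c : Fin G} {v w n : Fin P}
    (q : Fin P × List (Fin P × Fin P × Fin S)) :
    Prod.map id (· ++ [(w, n, ⟨s, h⟩)]) q ∉ rootedPaths pre T s c v := by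
  intro hq
  have := (mem_rootedPaths pre T).1 hq |>.2.2 (w, n, ⟨s, h⟩) (by simp)
  exact lt_irrefl s this

theorem card_rootedPaths {s : ℕ} {c : Fin G} {n : Fin P} :
    (rootedPaths pre T s c n).card = cntRun pre T s c n := by
  induction s generalizing n with
  | zero => by_cases hn : (c, n) ∈ pre <;> simp [rootedPaths, cntRun, hn]
  | succ s ih =>
    rw [rootedPaths, cntRun]
    split_ifs with h
    · rw [card_union_of_disjoint, card_biUnion, ih, sum_filter]
      · congr 1
        refine sum_congr rfl fun w _ => ?_
        split_ifs
        · rw [card_image_of_injective _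
            (Function.injective_id.prodMap (List.append_left_injective _)), ih]
        · rfl
      · intro w _ w' _ hne
        simp only [Function.onFun, disjoint_left, mem_image]
        rintro _ ⟨q, -, rfl⟩ ⟨q', -, heq⟩
        have hlast := congrArg (·.2.getLast?) heq
        simp only [Prod.map_snd, List.getLast?_concat, Option.some.injEq, Prod.mk.injEq] at hlast
        exact hne hlast.1.symm
      · simp only [disjoint_left, mem_biUnion, mem_image]
        rintro _ hq ⟨w, -, q, -, rfl⟩
        exact append_notMem_rootedPaths pre T h q hq
    · simp [ih]

theorem mem_stepRun_iff_cntRun_pos {s : ℕ} {c : Fin G} {n : Fin P} :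
    (c, n) ∈ stepRun pre T s ↔ 0 < cntRun pre T s c n := by
  induction s generalizing n with
  | zero => by_cases hn : (c, n) ∈ pre <;> simp [stepRun, cntRun, hn]
  | succ s ih =>
    simp only [stepRun, cntRun, Set.mem_union, Set.mem_ofPred_eq, Nat.add_pos_iff_pos_or_pos, ih]
    refine or_congr Iff.rfl ?_
    split_ifs with h
    · simp only [sum_pos_iff, mem_univ, true_and, exists_prop_of_true h]
      refine exists_congr fun w => ?_
      split_ifs with hT <;> simp [hT]
    · simp [h]

end

theorem cnt_eq_paths_general {G P S : ℕ}
    (pre : Set (Fin G × Fin P)) (T : Finset (Fin G × Fin P × Fin P × Fin S))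
    (c : Fin G) (n : Fin P) :
    cntRun pre T S c n =
      {q : Fin P × List (Fin P × Fin P × Fin S) |
        (c, q.1) ∈ pre ∧ IsCPath T c q.1 n q.2 ∧ ∀ e ∈ q.2, (e.2.2 : ℕ) < S}.ncard ∧
    ((c, n) ∈ stepRun pre T S ↔ 1 ≤ cntRun pre T S c n) := by
  refine ⟨?_, mem_stepRun_iff_cntRun_pos pre T⟩
  have hpaths : {q : Fin P × List (Fin P × Fin P × Fin S) |
      (c, q.1) ∈ pre ∧ IsCPath T c q.1 n q.2 ∧ ∀ e ∈ q.2, (e.2.2 : ℕ) < S} =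
      rootedPaths pre T S c n :=
    Set.ext fun _ => (mem_rootedPaths pre T).symm
  rw [hpaths, Set.ncard_coe_finset, card_rootedPaths]

/-- `cnt_S(c,n)` equals the number of pairs `(u, π)` with `(c,u) ∈ pre` and `π` a `c`-path
in `T` from `u` to `n` all of whose steps are `< S`; and `(c,n) ∈ V_S` iff `cnt_S(c,n) ≥ 1`. -/
theorem cnt_eq_paths {G P S : ℕ} (hG : 1 ≤ G) (hP : 1 ≤ P)
    (pre : Set (Fin G × Fin P)) (T : Finset (Fin G × Fin P × Fin P × Fin S))
    (c : Fin G) (n : Fin P) :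
    cntRun pre T S c n =
      {q : Fin P × List (Fin P × Fin P × Fin S) |
        (c, q.1) ∈ pre ∧ IsCPath T c q.1 n q.2 ∧ ∀ e ∈ q.2, (e.2.2 : ℕ) < S}.ncard ∧
    ((c, n) ∈ stepRun pre T S ↔ 1 ≤ cntRun pre T S c n) :=
  cnt_eq_paths_general pre T c n
end

section
/- (Soundness of the SMT encoding.) If an assignment of values start(c,n) ∈ ℕ, snd(n,c,n′) ∈ Bool, and r_1,…,r_S ∈ ℕ satisfies constraints (C1)–(C6) of the encoding of an instance (G, S, R, P, cap, pre, post), then the candidate T = {(c,n,n′,s) : 0 ≤ s < S, snd(n,c,n′) is true, and start(c,n′) = s+1} with round sequence r_1,…,r_S is a valid algorithm for the instance with total rounds R. -/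
/-- `T` with round sequence `r` is a valid algorithm for `(cap, pre, post)`:
(i) every send is of a chunk present at its source, (ii) the postcondition holds
after step `S`, (iii) for every step `s` and pair `(n,n')` the number of chunks sent
from `n` to `n'` at step `s` is at most `cap n n' * r s`. -/
def ValidAlgo {G P S : ℕ} (cap : Fin P → Fin P → ℕ) (pre post : Set (Fin G × Fin P))
    (T : Finset (Fin G × Fin P × Fin P × Fin S)) (r : Fin S → ℕ) : Prop :=
  (∀ c n n' s, (c, n, n', s) ∈ T → (c, n) ∈ stepRun pre T (s : ℕ)) ∧
  post ⊆ stepRun pre T S ∧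
  ∀ s n n',
    (T.filter fun x => x.2.1 = n ∧ x.2.2.1 = n' ∧ x.2.2.2 = s).card ≤ cap n n' * r s

/-- Soundness of the SMT encoding: any assignment satisfying (C1)–(C6) yields the valid
algorithm `T = {(c,n,n',s) : cap n n' > 0, snd n c n' , start c n' = s+1}` (the `snd`
variables only exist for links in `E = {(n,n') : cap n n' > 0}`) with round
sequence `r` and total rounds `R`. -/
theorem smt_encoding_sound {G P S R : ℕ} (hG : 1 ≤ G) (hP : 1 ≤ P)
    (cap : Fin P → Fin P → ℕ) (pre post : Set (Fin G × Fin P))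
    (start : Fin G → Fin P → ℕ) (snd : Fin P → Fin G → Fin P → Bool) (r : Fin S → ℕ)
    (C1 : ∀ c n, (c, n) ∈ pre → start c n = 0)
    (C2 : ∀ c n, (c, n) ∈ post → start c n ≤ S)
    (C3 : ∀ c n, (c, n) ∉ pre → start c n ≤ S →
      (∑ n' : Fin P, if 0 < cap n' n ∧ snd n' c n = true then 1 else 0) = 1)
    (C4 : ∀ c n n', 0 < cap n n' → snd n c n' = true → start c n < start c n')
    (C5 : ∀ s : Fin S, ∀ n n', 0 < cap n n' →
      (Finset.univ.filter fun c : Fin G =>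
        snd n c n' = true ∧ start c n' = (s : ℕ) + 1).card ≤ cap n n' * r s)
    (C6 : ∑ s, r s = R) :
    ValidAlgo cap pre post
      (Finset.univ.filter fun x : Fin G × Fin P × Fin P × Fin S =>
        0 < cap x.2.1 x.2.2.1 ∧ snd x.2.1 x.1 x.2.2.1 = true ∧
          start x.1 x.2.2.1 = (x.2.2.2 : ℕ) + 1) r ∧
    ∑ s, r s = R := by
  classical
  set T : Finset (Fin G × Fin P × Fin P × Fin S) :=
    Finset.univ.filter fun x : Fin G × Fin P × Fin P × Fin S =>
      0 < cap x.2.1 x.2.2.1 ∧ snd x.2.1 x.1 x.2.2.1 = true ∧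
        start x.1 x.2.2.1 = (x.2.2.2 : ℕ) + 1 with hT
  have hTmem : ∀ (c : Fin G) (n n' : Fin P) (s : Fin S),
      (c, n, n', s) ∈ T ↔ 0 < cap n n' ∧ snd n c n' = true ∧ start c n' = (s : ℕ) + 1 := by
    intro c n n' s
    simp [hT]
  have exwit : ∀ c n, (∑ n' : Fin P, if 0 < cap n' n ∧ snd n' c n = true then 1 else 0) = 1 →
      ∃ n', 0 < cap n' n ∧ snd n' c n = true := by
    intro c n h
    by_contra hno
    push_neg at hno
    have h0 : (∑ n' : Fin P, if 0 < cap n' n ∧ snd n' c n = true then 1 else 0) = 0 := by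
      apply Finset.sum_eq_zero
      intro n' _
      rw [if_neg]
      rintro ⟨h1, h2⟩
      exact hno n' h1 h2
    omega
  have key : ∀ s, s ≤ S → ∀ c n, start c n ≤ s → (c, n) ∈ stepRun pre T s := by
    intro s
    induction s with
    | zero =>
      intro _ c n hle
      by_contra hnot
      have hpre : (c, n) ∉ pre := hnot
      obtain ⟨n', hcap, hsnd⟩ := exwit c n (C3 c n hpre (by omega))
      have := C4 c n' n hcap hsnd
      omega
    | succ s ih =>
      intro hS c n hle
      rcases Nat.lt_or_ge (start c n) (s + 1) with h | h
      · exact Set.subset_union_left (ih (Nat.le_of_succ_le hS) c n (Nat.lt_succ_iff.mp h))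
      · have heq : start c n = s + 1 := le_antisymm hle h
        have hpre : (c, n) ∉ pre := fun hp => by
          have := C1 c n hp; omega
        obtain ⟨n', hcap, hsnd⟩ := exwit c n (C3 c n hpre (heq ▸ hS))
        have hlt := C4 c n' n hcap hsnd
        have hmem : (c, n') ∈ stepRun pre T s :=
          ih (Nat.le_of_succ_le hS) c n' (by omega)
        exact Or.inr ⟨n', hmem, Nat.lt_of_succ_le hS,
          (hTmem c n' n ⟨s, Nat.lt_of_succ_le hS⟩).2 ⟨hcap, hsnd, heq⟩⟩
  refine ⟨⟨?_, ?_, ?_⟩, C6⟩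
  · intro c n n' s hmem
    obtain ⟨hcap, hsnd, hstart⟩ := (hTmem c n n' s).1 hmem
    have := C4 c n n' hcap hsnd
    exact key s s.isLt.le c n (by omega)
  · intro q hq
    have := C2 q.1 q.2 hq
    exact key S le_rfl q.1 q.2 this
  · intro s n n'
    by_cases hc : 0 < cap n n'
    · refine le_trans ?_ (C5 s n n' hc)
      apply Finset.card_le_card_of_injOn (fun x => x.1)
      · intro x hx
        simp only [hT, Finset.mem_coe, Finset.mem_filter, Finset.mem_univ, true_and] at hx ⊢
        obtain ⟨⟨_, h2, h3⟩, e1, e2, e3⟩ := hx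
        rw [e1, e2] at h2
        rw [e2, e3] at h3
        exact ⟨h2, h3⟩
      · intro x hx y hy hxy
        simp only [hT, Finset.mem_coe, Finset.mem_filter, Finset.mem_univ, true_and] at hx hy
        obtain ⟨_, ex1, ex2, ex3⟩ := hx
        obtain ⟨_, ey1, ey2, ey3⟩ := hy
        have : x.2 = y.2 := by
          ext <;> simp_all
        exact Prod.ext hxy this
    · have : (T.filter fun x => x.2.1 = n ∧ x.2.2.1 = n' ∧ x.2.2.2 = s) = ∅ := by
        apply Finset.filter_eq_empty_iff.mpr
        intro x hx h
        obtain ⟨e1, e2, e3⟩ := h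
        rw [hT, Finset.mem_filter] at hx
        rw [e1, e2] at hx
        exact hc hx.2.1
      simp [this]
end

section
/- (Completeness of the SMT encoding.) If there exists a valid algorithm with S steps and total rounds R for an instance (G, S, R, P, cap, pre, post), then there exists an assignment of values start(c,n) ∈ ℕ, snd(n,c,n′) ∈ Bool, and r_1,…,r_S ∈ ℕ satisfying constraints (C1)–(C6) of the encoding. In particular, if (C1)–(C6) are unsatisfiable, no valid algorithm with S steps and R total rounds exists for the instance. -/
open Classical

/-- The first step at which `(c,n)` is present, or `S+1` if never within `S` steps. -/
noncomputable def startOf {G P S : ℕ} (pre : Set (Fin G × Fin P))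
    (T : Finset (Fin G × Fin P × Fin P × Fin S)) (c : Fin G) (n : Fin P) : ℕ :=
  Nat.find (p := fun s => (c, n) ∈ stepRun pre T s ∨ s = S + 1) ⟨S + 1, Or.inr rfl⟩

theorem startOf_le {G P S : ℕ} {pre : Set (Fin G × Fin P)}
    {T : Finset (Fin G × Fin P × Fin P × Fin S)} {c : Fin G} {n : Fin P} {s : ℕ}
    (h : (c, n) ∈ stepRun pre T s) : startOf pre T c n ≤ s :=
  Nat.find_le (Or.inl h)

theorem startOf_mem {G P S : ℕ} {pre : Set (Fin G × Fin P)}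
    {T : Finset (Fin G × Fin P × Fin P × Fin S)} {c : Fin G} {n : Fin P}
    (h : startOf pre T c n ≤ S) : (c, n) ∈ stepRun pre T (startOf pre T c n) := by
  rcases Nat.find_spec (p := fun s => (c, n) ∈ stepRun pre T s ∨ s = S + 1)
      ⟨S + 1, Or.inr rfl⟩ with h1 | h2
  · exact h1
  · have h2' : startOf pre T c n = S + 1 := h2
    omega

theorem exists_sender {G P S : ℕ} {cap : Fin P → Fin P → ℕ} {pre post : Set (Fin G × Fin P)}
    {T : Finset (Fin G × Fin P × Fin P × Fin S)} {r : Fin S → ℕ}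
    (hv : ValidAlgo cap pre post T r) :
    ∀ c n, (c, n) ∉ pre → startOf pre T c n ≤ S →
      ∃ (n₀ : Fin P) (t : ℕ), startOf pre T c n = t + 1 ∧ 0 < cap n₀ n ∧
        startOf pre T c n₀ ≤ t ∧ ∃ hlt : t < S, (c, n₀, n, ⟨t, hlt⟩) ∈ T := by
  intro c n hpre hle
  have hmem := startOf_mem hle
  have h0 : startOf pre T c n ≠ 0 := by
    intro h0
    rw [h0] at hmem
    exact hpre hmem
  obtain ⟨t, ht⟩ := Nat.exists_eq_succ_of_ne_zero h0
  rw [ht] at hmem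
  have hnot : (c, n) ∉ stepRun pre T t := fun hm => by
    have := startOf_le hm; omega
  simp only [stepRun, Set.mem_union, Set.mem_setOf_eq] at hmem
  rcases hmem with h | ⟨n₀, hn₀, hlt, hTm⟩
  · exact absurd h hnot
  · refine ⟨n₀, t, ht, ?_, startOf_le hn₀, hlt, hTm⟩
    have hcard := hv.2.2 ⟨t, hlt⟩ n₀ n
    have h1 : (c, n₀, n, (⟨t, hlt⟩ : Fin S)) ∈
        T.filter (fun x => x.2.1 = n₀ ∧ x.2.2.1 = n ∧ x.2.2.2 = ⟨t, hlt⟩) := by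
      simp [hTm]
    have hpos := Finset.card_pos.2 ⟨_, h1⟩
    rcases Nat.eq_zero_or_pos (cap n₀ n) with h0 | h
    · rw [h0, Nat.zero_mul] at hcard; omega
    · exact h

/-- Completeness of the SMT encoding: if a valid algorithm with `S` steps and total
rounds `R` exists for the instance, then constraints (C1)–(C6) are satisfiable. In
particular, if (C1)–(C6) are unsatisfiable, no such algorithm exists. -/
theorem smt_encoding_complete {G P S R : ℕ} (hG : 1 ≤ G) (hP : 1 ≤ P)
    (cap : Fin P → Fin P → ℕ) (pre post : Set (Fin G × Fin P))
    (halg : ∃ (T : Finset (Fin G × Fin P × Fin P × Fin S)) (r : Fin S → ℕ),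
      ValidAlgo cap pre post T r ∧ ∑ s, r s = R) :
    ∃ (start : Fin G → Fin P → ℕ) (snd : Fin P → Fin G → Fin P → Bool) (r : Fin S → ℕ),
      (∀ c n, (c, n) ∈ pre → start c n = 0) ∧
      (∀ c n, (c, n) ∈ post → start c n ≤ S) ∧
      (∀ c n, (c, n) ∉ pre → start c n ≤ S →
        (∑ n' : Fin P, if 0 < cap n' n ∧ snd n' c n = true then 1 else 0) = 1) ∧
      (∀ c n n', 0 < cap n n' → snd n c n' = true → start c n < start c n') ∧
      (∀ s : Fin S, ∀ n n', 0 < cap n n' →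
        (Finset.univ.filter fun c : Fin G =>
          snd n c n' = true ∧ start c n' = (s : ℕ) + 1).card ≤ cap n n' * r s) ∧
      ∑ s, r s = R := by
  classical
  obtain ⟨T, r, hv, hR⟩ := halg
  choose f g hstart hcap hle hlt hmem using exists_sender hv
  refine ⟨startOf pre T, fun n' c n =>
      if h : (c, n) ∉ pre ∧ startOf pre T c n ≤ S then decide (n' = f c n h.1 h.2) else false,
      r, ?_, ?_, ?_, ?_, ?_, hR⟩
  · intro c n h
    exact Nat.le_zero.mp (startOf_le (s := 0) (show (c, n) ∈ stepRun pre T 0 from h))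
  · intro c n h
    exact startOf_le (hv.2.1 h)
  · intro c n hpre hle'
    have hs : ∀ n' : Fin P,
        (if 0 < cap n' n ∧ (if h : (c, n) ∉ pre ∧ startOf pre T c n ≤ S then
            decide (n' = f c n h.1 h.2) else false) = true then 1 else 0) =
          if n' = f c n hpre hle' then 1 else 0 := by
      intro n'
      rw [dif_pos ⟨hpre, hle'⟩]
      by_cases h' : n' = f c n hpre hle'
      · simp [h', hcap c n hpre hle']
      · simp [h']
    rw [Finset.sum_congr rfl fun n' _ => hs n']
    simp
  · intro c n n' hc hsnd0
    have hsnd : (if h : (c, n') ∉ pre ∧ startOf pre T c n' ≤ S then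
        decide (n = f c n' h.1 h.2) else false) = true := hsnd0
    by_cases h : (c, n') ∉ pre ∧ startOf pre T c n' ≤ S
    · rw [dif_pos h, decide_eq_true_iff] at hsnd
      have h1 := hle c n' h.1 h.2
      have h2 := hstart c n' h.1 h.2
      rw [hsnd]
      omega
    · rw [dif_neg h] at hsnd
      simp at hsnd
  · intro s n n' hc
    have hsub : (Finset.univ.filter fun c : Fin G =>
        (if h : (c, n') ∉ pre ∧ startOf pre T c n' ≤ S then
          decide (n = f c n' h.1 h.2) else false) = true ∧
          startOf pre T c n' = (s : ℕ) + 1).card ≤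
        (T.filter fun x => x.2.1 = n ∧ x.2.2.1 = n' ∧ x.2.2.2 = s).card := by
      apply Finset.card_le_card_of_injOn (fun c => (c, n, n', s))
      · intro c hcmem
        simp only [Finset.mem_coe, Finset.mem_filter, Finset.mem_univ, true_and] at hcmem
        obtain ⟨hsnd0, hst⟩ := hcmem
        have hsnd : (if h : (c, n') ∉ pre ∧ startOf pre T c n' ≤ S then
            decide (n = f c n' h.1 h.2) else false) = true := hsnd0
        by_cases h : (c, n') ∉ pre ∧ startOf pre T c n' ≤ S
        · rw [dif_pos h, decide_eq_true_iff] at hsnd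
          have h2 := hstart c n' h.1 h.2
          have hg : g c n' h.1 h.2 = (s : ℕ) := by omega
          have hm := hmem c n' h.1 h.2
          have hfin : (⟨g c n' h.1 h.2, hlt c n' h.1 h.2⟩ : Fin S) = s := Fin.ext hg
          rw [hsnd, ← hfin]
          refine Finset.mem_filter.2 ⟨hm, ?_⟩
          simp
        · rw [dif_neg h] at hsnd
          simp at hsnd
      · intro a _ b _ hab
        exact congrArg Prod.fst hab
    exact hsub.trans (hv.2.2 s n n')
end

section
/- (Bandwidth lower bound from incoming capacity.) Let T with round sequence r_0,…,r_{S−1} be a valid algorithm for an instance (cap, pre, post) with total rounds R = Σ_s r_s. Then for every node n, the number of chunks c with (c,n) ∈ post and (c,n) ∉ pre is at most R · Σ_{n′} cap(n′,n) (the total incoming capacity of n times the number of rounds). -/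
lemma stepRun_send {G P S : ℕ} (pre : Set (Fin G × Fin P))
    (T : Finset (Fin G × Fin P × Fin P × Fin S)) (n : Fin P) :
    ∀ s c, (c, n) ∈ stepRun pre T s → (c, n) ∉ pre →
      ∃ n' t, (c, n', n, t) ∈ T := by
  intro s
  induction s with
  | zero => intro c hc hp; exact absurd hc hp
  | succ s ih =>
    intro c hc hp
    rcases hc with hc | ⟨n', hn', hlt, hT⟩
    · exact ih c hc hp
    · exact ⟨n', ⟨s, hlt⟩, hT⟩

/-- Bandwidth lower bound from incoming capacity: for a valid algorithm with total rounds
`R = Σ_s r_s`, the number of chunks a node must newly receive is at most `R` times its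
total incoming capacity. -/
theorem incoming_capacity_bound {G P S : ℕ} (hG : 1 ≤ G) (hP : 1 ≤ P)
    (cap : Fin P → Fin P → ℕ) (pre post : Set (Fin G × Fin P))
    (T : Finset (Fin G × Fin P × Fin P × Fin S)) (r : Fin S → ℕ)
    (h : ValidAlgo cap pre post T r) (n : Fin P) :
    {c : Fin G | (c, n) ∈ post ∧ (c, n) ∉ pre}.ncard ≤
      (∑ s, r s) * ∑ n' : Fin P, cap n' n := by
  classical
  obtain ⟨h1, h2, h3⟩ := h
  set A : Finset (Fin G) := Finset.univ.filter (fun c => (c, n) ∈ post ∧ (c, n) ∉ pre)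
  have hset : {c : Fin G | (c, n) ∈ post ∧ (c, n) ∉ pre} = (A : Set (Fin G)) := by
    ext c; simp [A]
  rw [hset, Set.ncard_coe_finset]
  set Tn := T.filter (fun x => x.2.2.1 = n)
  -- A injects into chunks of Tn
  have hsub : A ⊆ Tn.image (fun x => x.1) := by
    intro c hc
    simp only [A, Finset.mem_filter] at hc
    obtain ⟨n', t, hT⟩ := stepRun_send pre T n S c (h2 hc.2.1) hc.2.2
    simp only [Finset.mem_image]
    exact ⟨(c, n', n, t), by simp [Tn, Finset.mem_filter, hT], rfl⟩
  have h4 : A.card ≤ Tn.card :=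
    (Finset.card_le_card hsub).trans Finset.card_image_le
  -- partition Tn by (source, step)
  have h5 : Tn.card = ∑ p : Fin P × Fin S,
      (Tn.filter (fun x => x.2.1 = p.1 ∧ x.2.2.2 = p.2)).card := by
    rw [Finset.card_eq_sum_card_fiberwise
      (f := fun x => (x.2.1, x.2.2.2)) (t := Finset.univ) (fun x _ => Finset.mem_univ _)]
    congr 1; ext p; congr 1; ext x; simp [Prod.ext_iff, and_comm]
  have h6 : ∀ p : Fin P × Fin S,
      (Tn.filter (fun x => x.2.1 = p.1 ∧ x.2.2.2 = p.2)).card ≤ cap p.1 n * r p.2 := by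
    intro p
    refine le_trans (le_of_eq ?_) (h3 p.2 p.1 n)
    congr 1
    rw [Finset.filter_filter]
    congr 1; ext x; constructor
    · rintro ⟨ha, hb, hc⟩; exact ⟨hb, ha, hc⟩
    · rintro ⟨ha, hb, hc⟩; exact ⟨hb, ha, hc⟩
  calc A.card ≤ Tn.card := h4
    _ = _ := h5
    _ ≤ ∑ p : Fin P × Fin S, cap p.1 n * r p.2 := Finset.sum_le_sum (fun p _ => h6 p)
    _ = ∑ n' : Fin P, cap n' n * ∑ s, r s := by
        rw [Fintype.sum_prod_type]; simp [Finset.mul_sum]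
    _ = (∑ s, r s) * ∑ n' : Fin P, cap n' n := by
        rw [← Finset.sum_mul, mul_comm]
end

section
/- (Bandwidth optimality bound for Allgather on DGX-1.) Every valid algorithm for the Allgather collective with C ≥ 1 chunks per node on the DGX-1 topology, with total rounds R, satisfies 6·R ≥ 7·C (i.e., the bandwidth cost R/C is at least 7/6). -/
/-- Allgather precondition with `C` chunks per node (`G = C*P`):
chunk `c` initially resides exactly on node `c mod P`. -/
def agPre (C P : ℕ) : Set (Fin (C * P) × Fin P) := {q | (q.1 : ℕ) % P = (q.2 : ℕ)}

/-- The DGX-1 topology on 8 GPUs: capacity 2 in both directions on the undirected edges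
{0,1},{1,4},{4,5},{5,6},{6,7},{2,7},{2,3},{0,3}; capacity 1 in both directions on
{0,2},{1,2},{1,3},{3,6},{4,6},{4,7},{5,7},{0,5}; capacity 0 otherwise. -/
def dgx1cap (n n' : Fin 8) : ℕ :=
  if ((n, n') ∈ ([(0,1),(1,4),(4,5),(5,6),(6,7),(2,7),(2,3),(0,3)] : List (Fin 8 × Fin 8))
      ∨ (n', n) ∈ ([(0,1),(1,4),(4,5),(5,6),(6,7),(2,7),(2,3),(0,3)] : List (Fin 8 × Fin 8)))
  then 2
  else if ((n, n') ∈ ([(0,2),(1,2),(1,3),(3,6),(4,6),(4,7),(5,7),(0,5)] : List (Fin 8 × Fin 8))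
      ∨ (n', n) ∈ ([(0,2),(1,2),(1,3),(3,6),(4,6),(4,7),(5,7),(0,5)] : List (Fin 8 × Fin 8)))
  then 1 else 0

/-- Bandwidth optimality bound for Allgather on DGX-1: every valid algorithm with `C ≥ 1`
chunks per node and total rounds `R` satisfies `6R ≥ 7C`. -/
theorem dgx1_allgather_bandwidth_bound (C : ℕ) (hC : 1 ≤ C) (S : ℕ)
    (T : Finset (Fin (C * 8) × Fin 8 × Fin 8 × Fin S)) (r : Fin S → ℕ)
    (h : ValidAlgo dgx1cap (agPre C 8) Set.univ T r) :
    7 * C ≤ 6 * ∑ s, r s := by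
  classical
  obtain ⟨hsrc, hpost, hcap⟩ := h
  -- every chunk not originating at node 0 that reaches node 0 was sent into node 0
  have key : ∀ (c : Fin (C*8)) (s : ℕ), (c, (0:Fin 8)) ∈ stepRun (agPre C 8) T s →
      (c:ℕ) % 8 ≠ 0 → ∃ x ∈ T, x.1 = c ∧ x.2.2.1 = 0 := by
    intro c s
    induction s with
    | zero =>
        intro hm hne
        exact absurd hm (by simpa [stepRun, agPre] using hne)
    | succ s ih =>
        intro hm hne
        rcases hm with hm | ⟨n, hn, hs, hT⟩
        · exact ih hm hne
        · exact ⟨(c, n, 0, ⟨s, hs⟩), hT, rfl, rfl⟩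
  set A := T.filter (fun x => x.2.2.1 = (0:Fin 8)) with hA
  -- lower bound on |A|
  have hsurj : ∀ c : Fin (C*8), (c:ℕ) % 8 ≠ 0 → ∃ x ∈ A, x.1 = c := by
    intro c hc
    obtain ⟨x, hxT, hx1, hx0⟩ := key c S (hpost (Set.mem_univ _)) hc
    exact ⟨x, Finset.mem_filter.2 ⟨hxT, hx0⟩, hx1⟩
  have hcnt0 : (Finset.univ.filter (fun c : Fin (C*8) => (c:ℕ) % 8 = 0)).card = C := by
    have himg : (Finset.univ.filter (fun c : Fin (C*8) => (c:ℕ) % 8 = 0)) =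
        Finset.image (fun k : Fin C => (⟨8 * (k:ℕ), by
          have := k.2; calc 8 * (k:ℕ) < 8 * C := by omega
            _ = C * 8 := by ring⟩ : Fin (C*8))) Finset.univ := by
      ext c
      simp only [Finset.mem_filter, Finset.mem_univ, true_and, Finset.mem_image]
      constructor
      · intro hc
        have hdiv : (c:ℕ) / 8 < C := by
          have := c.2
          exact Nat.div_lt_of_lt_mul (by omega)
        refine ⟨⟨(c:ℕ)/8, hdiv⟩, ?_⟩
        apply Fin.ext
        simp only []
        omega
      · rintro ⟨k, rfl⟩
        simp [Nat.mul_mod_right]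
    rw [himg, Finset.card_image_of_injective _ (fun a b hab => by
      apply Fin.ext
      have : 8 * (a:ℕ) = 8 * (b:ℕ) := congrArg Fin.val hab
      omega)]
    simp
  have hcnt : (Finset.univ.filter (fun c : Fin (C*8) => (c:ℕ) % 8 ≠ 0)).card = 7 * C := by
    have hsplit := Finset.card_filter_add_card_filter_not
      (s := (Finset.univ : Finset (Fin (C*8)))) (p := fun c : Fin (C*8) => (c:ℕ) % 8 = 0)
    simp only [Finset.card_univ, Fintype.card_fin] at hsplit
    rw [hcnt0] at hsplit
    simp only [ne_eq]
    omega
  have hlow : 7 * C ≤ A.card := by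
    rw [← hcnt]
    apply Finset.card_le_card_of_surjOn (fun x => x.1)
    intro c hc
    rw [Finset.coe_filter] at hc
    obtain ⟨x, hxA, hx1⟩ := hsurj c hc.2
    exact ⟨x, hxA, hx1⟩
  -- upper bound on |A|
  have hsum6 : ∀ s : Fin S, ∑ n : Fin 8, dgx1cap n 0 * r s = 6 * r s := by
    intro s
    rw [← Finset.sum_mul]
    congr 1
  have hup : A.card ≤ 6 * ∑ s, r s := by
    have hsub : A ⊆ (Finset.univ : Finset (Fin 8 × Fin S)).biUnion
        (fun p => T.filter fun x => x.2.1 = p.1 ∧ x.2.2.1 = 0 ∧ x.2.2.2 = p.2) := by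
      intro x hx
      rcases Finset.mem_filter.1 hx with ⟨hxT, hx0⟩
      exact Finset.mem_biUnion.2 ⟨(x.2.1, x.2.2.2), Finset.mem_univ _,
        Finset.mem_filter.2 ⟨hxT, rfl, hx0, rfl⟩⟩
    calc A.card ≤ ∑ p : Fin 8 × Fin S,
          (T.filter fun x => x.2.1 = p.1 ∧ x.2.2.1 = 0 ∧ x.2.2.2 = p.2).card :=
          le_trans (Finset.card_le_card hsub) (Finset.card_biUnion_le)
      _ ≤ ∑ p : Fin 8 × Fin S, dgx1cap p.1 0 * r p.2 :=
          Finset.sum_le_sum (fun p _ => hcap p.2 p.1 0)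
      _ = ∑ n : Fin 8, ∑ s : Fin S, dgx1cap n 0 * r s := by
          rw [Fintype.sum_prod_type]
      _ = ∑ s : Fin S, ∑ n : Fin 8, dgx1cap n 0 * r s := Finset.sum_comm
      _ = ∑ s : Fin S, 6 * r s := Finset.sum_congr rfl (fun s _ => hsum6 s)
      _ = 6 * ∑ s, r s := (Finset.mul_sum _ _ _).symm
  omega
end

section
/- (Existence of a latency-optimal 2-step Allgather on DGX-1.) There exists a valid algorithm for the Allgather collective with C = 1 chunk per node on the DGX-1 topology with S = 2 steps and round sequence r_0 = r_1 = 1 (total rounds R = 2). One such algorithm: in step 0 every node sends its own chunk to each of its 4 neighbors; in step 1 every node in {0,1,2,3} forwards the chunk it received from its neighbor in {4,5,6,7} to its 3 neighbors in {0,1,2,3}, and symmetrically for nodes in {4,5,6,7}. -/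
def dgxSends : List (Fin (1 * 8) × Fin 8 × Fin 8 × Fin 2) :=
  [(0,0,1,0),(0,0,3,0),(0,0,2,0),(0,0,5,0),
   (1,1,0,0),(1,1,4,0),(1,1,2,0),(1,1,3,0),
   (2,2,7,0),(2,2,3,0),(2,2,0,0),(2,2,1,0),
   (3,3,2,0),(3,3,0,0),(3,3,1,0),(3,3,6,0),
   (4,4,1,0),(4,4,5,0),(4,4,6,0),(4,4,7,0),
   (5,5,4,0),(5,5,6,0),(5,5,7,0),(5,5,0,0),
   (6,6,5,0),(6,6,7,0),(6,6,3,0),(6,6,4,0),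
   (7,7,6,0),(7,7,2,0),(7,7,4,0),(7,7,5,0),
   (5,0,1,1),(5,0,2,1),(5,0,3,1),
   (4,1,0,1),(4,1,2,1),(4,1,3,1),
   (7,2,0,1),(7,2,1,1),(7,2,3,1),
   (6,3,0,1),(6,3,1,1),(6,3,2,1),
   (1,4,5,1),(1,4,6,1),(1,4,7,1),
   (0,5,4,1),(0,5,6,1),(0,5,7,1),
   (3,6,4,1),(3,6,5,1),(3,6,7,1),
   (2,7,4,1),(2,7,5,1),(2,7,6,1)]

set_option maxHeartbeats 4000000 in
/-- Existence of a latency-optimal 2-step Allgather on DGX-1 with `C = 1` chunk per node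
and round sequence `r_0 = r_1 = 1` (total rounds `R = 2`). -/
theorem dgx1_allgather_two_step_exists :
    ∃ T : Finset (Fin (1 * 8) × Fin 8 × Fin 8 × Fin 2),
      ValidAlgo dgx1cap (agPre 1 8) Set.univ T (fun _ => 1) := by
  refine ⟨dgxSends.toFinset, ?_, ?_, ?_⟩
  · intro c n n' s h
    fin_cases s
    · revert h
      show (c, n, n', (0 : Fin 2)) ∈ dgxSends.toFinset → (c, n) ∈ agPre 1 8
      simp only [agPre, Set.mem_setOf_eq]
      revert c n n'
      decide
    · revert h
      show (c, n, n', (1 : Fin 2)) ∈ dgxSends.toFinset → (c, n) ∈ stepRun (agPre 1 8) _ 1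
      simp only [agPre, stepRun, Set.mem_setOf_eq, Set.mem_union]
      revert c n n'
      decide
  · have key : ∀ q : Fin (1 * 8) × Fin 8, q ∈ stepRun (agPre 1 8) dgxSends.toFinset 2 := by
      simp only [agPre, stepRun, Set.mem_setOf_eq, Set.mem_union, Fin.mk_zero, Fin.mk_one,
        exists_prop, Nat.zero_lt_two, Nat.one_lt_two, true_and]
      decide
    exact fun q _ => key q
  · decide
end

section
/- (Existence of the Pareto-optimal 2-step, 3-round Allgather on DGX-1.) There exists a valid algorithm for the Allgather collective with C = 2 chunks per node on the DGX-1 topology with S = 2 steps and total rounds R = 3 (for some round sequence r_0, r_1 with r_0 + r_1 = 3). -/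
def dgxL : List (Fin (2 * 8) × Fin 8 × Fin 8 × Fin 2) :=
  [(0,0,1,0), (0,0,2,0), (0,0,3,0), (0,0,5,0), (0,2,7,1), (0,5,4,1), (0,5,6,1), (1,1,0,0), (1,1,2,0), (1,1,3,0), (1,1,4,0), (1,2,7,1), (1,3,6,1), (1,4,5,1), (2,0,5,1), (2,1,4,1), (2,2,0,0), (2,2,1,0), (2,2,3,0), (2,2,7,0), (2,7,6,1), (3,1,4,1), (3,3,0,0), (3,3,1,0), (3,3,2,0), (3,3,6,0), (3,6,5,1), (3,6,7,1), (4,1,0,1), (4,1,3,1), (4,4,1,0), (4,4,5,0), (4,4,6,0), (4,4,7,0), (4,7,2,1), (5,0,1,1), (5,0,2,1), (5,0,3,1), (5,5,0,0), (5,5,4,0), (5,5,6,0), (5,5,7,0), (6,3,0,1), (6,3,2,1), (6,4,1,1), (6,6,3,0), (6,6,4,0), (6,6,5,0), (6,6,7,0), (7,2,0,1), (7,2,1,1), (7,2,3,1), (7,7,2,0), (7,7,4,0), (7,7,5,0), (7,7,6,0), (8,0,1,0), (8,0,2,0), (8,0,3,0), (8,0,5,0), (8,5,4,1), (8,5,6,1),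 (8,5,7,1), (9,1,0,0), (9,1,2,0), (9,1,3,0), (9,1,4,0), (9,4,5,1), (9,4,6,1), (9,4,7,1), (10,2,0,0), (10,2,1,0), (10,2,3,0), (10,2,7,0), (10,7,4,1), (10,7,5,1), (10,7,6,1), (11,3,0,0), (11,3,1,0), (11,3,2,0), (11,3,6,0), (11,6,4,1), (11,6,5,1), (11,6,7,1), (12,1,0,1), (12,1,2,1), (12,4,1,0), (12,4,5,0), (12,4,6,0), (12,4,7,0), (12,6,3,1), (13,0,1,1), (13,0,3,1), (13,5,0,0), (13,5,4,0), (13,5,6,0), (13,5,7,0), (13,7,2,1), (14,3,0,1), (14,3,1,1), (14,3,2,1), (14,6,3,0), (14,6,4,0), (14,6,5,0), (14,6,7,0), (15,2,3,1), (15,4,1,1), (15,5,0,1), (15,7,2,0), (15,7,4,0), (15,7,5,0), (15,7,6,0)]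

def dgxT : Finset (Fin (2 * 8) × Fin 8 × Fin 8 × Fin 2) :=
  ⟨↑dgxL, by decide⟩

set_option maxRecDepth 1500

def V0L : List (Fin (2 * 8) × Fin 8) := [(0,0), (1,1), (2,2), (3,3), (4,4), (5,5), (6,6), (7,7), (8,0), (9,1), (10,2), (11,3), (12,4), (13,5), (14,6), (15,7)]
def V1L : List (Fin (2 * 8) × Fin 8) := [(0,0), (0,1), (0,2), (0,3), (0,5), (1,0), (1,1), (1,2), (1,3), (1,4), (2,0), (2,1), (2,2), (2,3), (2,7), (3,0), (3,1), (3,2), (3,3), (3,6), (4,1), (4,4), (4,5), (4,6), (4,7), (5,0), (5,4), (5,5), (5,6), (5,7), (6,3), (6,4), (6,5), (6,6), (6,7), (7,2), (7,4), (7,5), (7,6), (7,7), (8,0), (8,1), (8,2), (8,3), (8,5), (9,0), (9,1), (9,2), (9,3), (9,4), (10,0), (10,1), (10,2), (10,3), (10,7), (11,0), (11,1), (11,2), (11,3), (11,6), (12,1), (12,4), (12,5), (12,6), (12,7), (13,0), (13,4), (13,5), (13,6), (13,7), (14,3), (14,4), (14,5), (14,6), (14,7), (15,2), (15,4), (15,5),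 (15,6), (15,7)]
def V2L : List (Fin (2 * 8) × Fin 8) := [(0,0), (0,1), (0,2), (0,3), (0,4), (0,5), (0,6), (0,7), (1,0), (1,1), (1,2), (1,3), (1,4), (1,5), (1,6), (1,7), (2,0), (2,1), (2,2), (2,3), (2,4), (2,5), (2,6), (2,7), (3,0), (3,1), (3,2), (3,3), (3,4), (3,5), (3,6), (3,7), (4,0), (4,1), (4,2), (4,3), (4,4), (4,5), (4,6), (4,7), (5,0), (5,1), (5,2), (5,3), (5,4), (5,5), (5,6), (5,7), (6,0), (6,1), (6,2), (6,3), (6,4), (6,5), (6,6), (6,7), (7,0), (7,1), (7,2), (7,3), (7,4), (7,5), (7,6), (7,7), (8,0), (8,1), (8,2), (8,3), (8,4), (8,5), (8,6), (8,7), (9,0), (9,1), (9,2), (9,3), (9,4), (9,5), (9,6), (9,7), (10,0), (10,1), (10,2), (10,3), (10,4), (10,5), (10,6), (10,7), (11,0), (11,1), (11,2), (11,3), (11,4), (11,5), (11,6), (11,7), (12,0), (12,1), (12,2), (12,3), (12,4), (12,5), (12,6), (12,7), (13,0), (13,1), (13,2), (13,3), (13,4), (13,5), (13,6), (13,7), (14,0),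 (14,1), (14,2), (14,3), (14,4), (14,5), (14,6), (14,7), (15,0), (15,1), (15,2), (15,3), (15,4), (15,5), (15,6), (15,7)]

lemma mem_dgxT (x : Fin (2 * 8) × Fin 8 × Fin 8 × Fin 2) : x ∈ dgxT ↔ x ∈ dgxL :=
  Finset.mem_mk.trans Multiset.mem_coe

/-- Generic step lemma: if level `s` is the set of members of list `V`, and list `W`
correctly describes one more step, then level `s+1` is the set of members of `W`. -/
lemma run_succ (s : ℕ) (hs : s < 2) (V W : List (Fin (2 * 8) × Fin 8))
    (h : stepRun (agPre 2 8) dgxT s = {q | q ∈ V})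
    (h1 : (V.all fun q => W.elem q) = true)
    (h2 : (dgxL.all fun x =>
      !(x.2.2.2 == (⟨s, hs⟩ : Fin 2)) || !(V.elem (x.1, x.2.1)) ||
        W.elem (x.1, x.2.2.1)) = true)
    (h3 : (W.all fun q => V.elem q ||
      dgxL.any fun x => x.2.2.2 == (⟨s, hs⟩ : Fin 2) && V.elem (x.1, x.2.1) &&
        x.1 == q.1 && x.2.2.1 == q.2) = true) :
    stepRun (agPre 2 8) dgxT (s + 1) = {q | q ∈ W} := by
  simp only [List.all_eq_true, List.any_eq_true, List.elem_iff, Bool.or_eq_true,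
    Bool.not_eq_true', Bool.and_eq_true, beq_iff_eq, beq_eq_false_iff_ne, ne_eq] at h1 h2 h3
  ext q
  rw [show stepRun (agPre 2 8) dgxT (s + 1) = stepRun (agPre 2 8) dgxT s ∪
      {p | ∃ n, (p.1, n) ∈ stepRun (agPre 2 8) dgxT s ∧
        ∃ h : s < 2, (p.1, n, p.2, ⟨s, h⟩) ∈ dgxT} from rfl]
  simp only [Set.mem_union, Set.mem_setOf_eq, h]
  constructor
  · rintro (hq | ⟨n, hn, hlt, hmem⟩)
    · exact h1 q hq
    · have := h2 _ ((mem_dgxT _).mp hmem)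
      rcases this with (hne | hnv) | hw
      · exact absurd rfl hne
      · have hne := List.elem_iff.mpr hn
        rw [hnv] at hne
        cases hne
      · exact hw
  · intro hq
    rcases h3 q hq with hv | ⟨x, hxL, ⟨⟨hxs, hxV⟩, hx1⟩, hx2⟩
    · exact Or.inl hv
    · refine Or.inr ⟨x.2.1, ?_, hs, ?_⟩
      · rw [hx1] at hxV; exact hxV
      · have : (x.1, x.2.1, x.2.2.1, x.2.2.2) = (q.1, x.2.1, q.2, (⟨s, hs⟩ : Fin 2)) := by
          rw [hx1, hx2, hxs]
        rw [← this]
        exact (mem_dgxT _).mpr hxL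

lemma run0 : stepRun (agPre 2 8) dgxT 0 = {q | q ∈ V0L} :=
  Set.ext fun q => by
    simpa only [stepRun, agPre, Set.mem_setOf_eq] using
      (by decide : ∀ p : Fin (2 * 8) × Fin 8, ((p.1 : ℕ) % 8 = (p.2 : ℕ)) ↔ p ∈ V0L) q

lemma run1 : stepRun (agPre 2 8) dgxT 1 = {q | q ∈ V1L} :=
  run_succ 0 (by norm_num) V0L V1L run0 (by decide) (by decide) (by decide)

lemma run2 : stepRun (agPre 2 8) dgxT 2 = {q | q ∈ V2L} :=
  run_succ 1 (by norm_num) V1L V2L run1 (by decide) (by decide) (by decide)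

lemma cond0 : (dgxL.all fun x =>
    !(x.2.2.2 == (0 : Fin 2)) || V0L.elem (x.1, x.2.1)) = true := by decide

lemma cond1 : (dgxL.all fun x =>
    !(x.2.2.2 == (1 : Fin 2)) || V1L.elem (x.1, x.2.1)) = true := by decide

lemma mem_V2L : ∀ q : Fin (2 * 8) × Fin 8, q ∈ V2L := by decide

/-- Existence of the Pareto-optimal 2-step, 3-round Allgather on DGX-1 with `C = 2`
chunks per node. -/
theorem dgx1_allgather_two_step_three_round_exists :
    ∃ (T : Finset (Fin (2 * 8) × Fin 8 × Fin 8 × Fin 2)) (r : Fin 2 → ℕ),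
      ValidAlgo dgx1cap (agPre 2 8) Set.univ T r ∧ ∑ s, r s = 3 := by
  refine ⟨dgxT, ![2, 1], ⟨?_, ?_, ?_⟩, by decide⟩
  · intro c n n' s h
    have hl : (c, n, n', s) ∈ dgxL := (mem_dgxT _).mp h
    fin_cases s
    · show (c, n) ∈ stepRun (agPre 2 8) dgxT 0
      rw [run0]
      have := List.all_eq_true.mp cond0 _ hl
      simp only [Bool.or_eq_true, Bool.not_eq_true', List.elem_iff, beq_eq_false_iff_ne,
        ne_eq] at this
      rcases this with h' | h'
      · exact absurd rfl h'
      · exact h'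
    · show (c, n) ∈ stepRun (agPre 2 8) dgxT 1
      rw [run1]
      have := List.all_eq_true.mp cond1 _ hl
      simp only [Bool.or_eq_true, Bool.not_eq_true', List.elem_iff, beq_eq_false_iff_ne,
        ne_eq] at this
      rcases this with h' | h'
      · exact absurd rfl h'
      · exact h'
  · intro q _
    exact (Set.ext_iff.mp run2 q).mpr (mem_V2L q)
  · decide
end

section
/- (Existence of a bandwidth-optimal 3-step Allgather on DGX-1.) There exists a valid algorithm for the Allgather collective with C = 6 chunks per node on the DGX-1 topology with S = 3 steps and total rounds R = 7 (for some round sequence r_0, r_1, r_2 with r_0 + r_1 + r_2 = 7). Its bandwidth cost R/C = 7/6 matches the lower bound 6R ≥ 7C, so it is bandwidth-optimal. -/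
section Deliveries

variable {G P S : ℕ} {pre : Set (Fin G × Fin P)} {T : Finset (Fin G × Fin P × Fin P × Fin S)}

lemma stepRun_mono : Monotone (stepRun pre T) :=
  monotone_nat_of_le_succ fun _ => Set.subset_union_left

lemma pre_subset_stepRun (s : ℕ) : pre ⊆ stepRun pre T s :=
  stepRun_mono s.zero_le

lemma mem_stepRun_succ_of_mem {c : Fin G} {n n' : Fin P} {s : Fin S}
    (hc : (c, n) ∈ stepRun pre T s) (hT : (c, n, n', s) ∈ T) :
    (c, n') ∈ stepRun pre T (s + 1) :=
  Or.inr ⟨n, hc, s.isLt, hT⟩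

def deliveries (D : Finset (Fin G × Fin P)) (src : Fin G × Fin P → Fin P)
    (time : Fin G × Fin P → Fin S) : Finset (Fin G × Fin P × Fin P × Fin S) :=
  D.map ⟨fun q => (q.1, src q, q.2, time q),
    fun _ _ h => by
      simp only [Prod.mk.injEq] at h
      exact Prod.ext h.1 h.2.2.1⟩

variable {D : Finset (Fin G × Fin P)} {src : Fin G × Fin P → Fin P}
  {time : Fin G × Fin P → Fin S}

abbrev IsCausal (pre : Set (Fin G × Fin P)) (D : Finset (Fin G × Fin P))
    (src : Fin G × Fin P → Fin P) (time : Fin G × Fin P → Fin S) : Prop :=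
  ∀ q ∈ D, (q.1, src q) ∈ pre ∨ (q.1, src q) ∈ D ∧ time (q.1, src q) < time q

lemma src_mem_stepRun_deliveries (hcausal : IsCausal pre D src time)
    (q : Fin G × Fin P) (hq : q ∈ D) :
    (q.1, src q) ∈ stepRun pre (deliveries D src time) (time q) := by
  induction hs : time q using WellFoundedLT.induction generalizing q with
  | ind s ih =>
    subst hs
    obtain hpre | ⟨hD, hlt⟩ := hcausal q hq
    · exact pre_subset_stepRun _ hpre
    · have hsender := ih _ hlt (q.1, src q) hD rfl
      exact stepRun_mono (Nat.succ_le_of_lt hlt)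
        (mem_stepRun_succ_of_mem hsender (Finset.mem_map_of_mem _ hD))

lemma mem_stepRun_deliveries (hcausal : IsCausal pre D src time)
    {q : Fin G × Fin P} (hq : q ∈ D) :
    q ∈ stepRun pre (deliveries D src time) (time q + 1) :=
  mem_stepRun_succ_of_mem (src_mem_stepRun_deliveries hcausal q hq) (Finset.mem_map_of_mem _ hq)

theorem validAlgo_deliveries {cap : Fin P → Fin P → ℕ} {post : Set (Fin G × Fin P)}
    {r : Fin S → ℕ}
    (hcausal : IsCausal pre D src time) (hpost : ∀ q ∈ post, q ∈ pre ∨ q ∈ D)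
    (hcap : ∀ s n n', ((deliveries D src time).filter
      fun x => x.2.1 = n ∧ x.2.2.1 = n' ∧ x.2.2.2 = s).card ≤ cap n n' * r s) :
    ValidAlgo cap pre post (deliveries D src time) r := by
  refine ⟨?_, fun q hq => ?_, hcap⟩
  · intro c n n' s hx
    obtain ⟨q, hq, hqx⟩ := Finset.mem_map.1 hx
    cases hqx
    exact src_mem_stepRun_deliveries hcausal q hq
  · obtain hpre | hD := hpost q hq
    · exact pre_subset_stepRun _ hpre
    · exact stepRun_mono (time q).isLt (mem_stepRun_deliveries hcausal hD)

end Deliveries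

instance (C P : ℕ) : DecidablePred (· ∈ agPre C P) :=
  fun q => inferInstanceAs (Decidable ((q.1 : ℕ) % P = q.2))

/-- Entry `n` of row `c` is the sender of chunk `c` to node `n` and the step of that send; the
entry at the home node `c % 8` is a placeholder. -/
def dgx1AllgatherSchedule : Fin (6 * 8) → Fin 8 → Fin 8 × Fin 3 := ![
    ![(0, 0), (0, 2), (3, 1), (0, 0), (6, 2), (6, 2), (3, 1), (6, 2)],
    ![(1, 0), (1, 0), (1, 0), (0, 1), (1, 2), (0, 2), (3, 2), (2, 2)],
    ![(2, 0), (4, 2), (2, 0), (2, 0), (7, 1), (7, 1), (7, 2), (2, 0)],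
    ![(3, 0), (0, 2), (3, 0), (3, 0), (5, 2), (0, 1), (3, 2), (5, 2)],
    ![(5, 2), (4, 2), (7, 1), (2, 2), (4, 0), (4, 0), (5, 1), (4, 0)],
    ![(5, 2), (4, 2), (7, 2), (6, 2), (5, 0), (5, 0), (5, 0), (6, 1)],
    ![(1, 2), (4, 1), (7, 2), (1, 2), (6, 0), (4, 1), (6, 0), (6, 0)],
    ![(3, 2), (3, 2), (7, 0), (2, 1), (7, 2), (6, 1), (7, 0), (7, 0)],
    ![(0, 0), (0, 0), (0, 2), (0, 0), (6, 2), (6, 2), (3, 1), (6, 2)],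
    ![(2, 2), (1, 0), (1, 0), (2, 2), (1, 0), (4, 1), (4, 2), (5, 2)],
    ![(2, 0), (0, 1), (2, 0), (2, 0), (1, 2), (6, 2), (7, 1), (2, 0)],
    ![(3, 0), (3, 0), (3, 0), (3, 0), (1, 1), (4, 2), (7, 2), (2, 1)],
    ![(2, 2), (4, 0), (1, 1), (1, 2), (4, 0), (6, 1), (4, 0), (6, 1)],
    ![(5, 0), (0, 1), (0, 1), (0, 1), (1, 2), (5, 0), (5, 0), (2, 2)],
    ![(5, 2), (4, 2), (7, 2), (6, 2), (5, 1), (6, 0), (6, 0), (6, 0)],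
    ![(2, 1), (0, 2), (7, 0), (2, 1), (7, 0), (6, 1), (7, 0), (7, 0)],
    ![(0, 0), (0, 0), (1, 2), (0, 1), (5, 2), (0, 0), (5, 1), (5, 1)],
    ![(3, 1), (1, 0), (3, 1), (1, 0), (1, 0), (6, 2), (4, 1), (6, 2)],
    ![(1, 2), (2, 0), (2, 0), (2, 2), (1, 1), (4, 2), (4, 2), (2, 2)],
    ![(1, 1), (3, 0), (1, 2), (3, 0), (1, 2), (0, 2), (3, 0), (6, 2)],
    ![(1, 1), (4, 0), (7, 2), (0, 2), (4, 0), (4, 0), (5, 2), (5, 1)],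
    ![(5, 0), (0, 1), (0, 1), (0, 2), (5, 0), (5, 0), (5, 1), (2, 2)],
    ![(1, 2), (4, 1), (7, 2), (1, 2), (6, 0), (6, 0), (6, 0), (6, 0)],
    ![(5, 1), (0, 2), (0, 2), (0, 2), (5, 2), (7, 0), (7, 1), (7, 0)],
    ![(0, 0), (0, 0), (3, 2), (0, 0), (5, 2), (0, 0), (5, 1), (6, 2)],
    ![(1, 0), (1, 0), (3, 2), (0, 1), (5, 2), (0, 1), (5, 2), (5, 2)],
    ![(3, 1), (2, 1), (2, 0), (2, 0), (1, 2), (0, 2), (3, 2), (2, 2)],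
    ![(3, 0), (0, 1), (3, 0), (3, 0), (1, 2), (7, 2), (7, 2), (2, 1)],
    ![(1, 2), (4, 1), (7, 1), (2, 2), (4, 0), (4, 0), (5, 2), (4, 0)],
    ![(2, 2), (2, 2), (7, 1), (6, 2), (5, 1), (5, 0), (7, 1), (5, 0)],
    ![(3, 1), (4, 2), (3, 2), (6, 0), (5, 1), (6, 0), (6, 0), (4, 2)],
    ![(1, 2), (2, 1), (7, 0), (2, 1), (5, 2), (7, 1), (5, 2), (7, 0)],
    ![(0, 0), (3, 1), (0, 0), (0, 0), (7, 2), (7, 2), (7, 2), (2, 1)],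
    ![(1, 0), (1, 0), (7, 2), (0, 2), (1, 0), (4, 1), (5, 2), (4, 1)],
    ![(1, 1), (2, 0), (2, 0), (0, 2), (1, 1), (6, 2), (7, 1), (2, 0)],
    ![(3, 2), (3, 2), (3, 1), (3, 0), (6, 1), (4, 2), (3, 0), (6, 1)],
    ![(3, 2), (4, 0), (1, 1), (1, 1), (4, 0), (6, 2), (4, 0), (4, 2)],
    ![(1, 2), (4, 1), (7, 1), (2, 2), (5, 0), (5, 0), (5, 0), (5, 0)],
    ![(3, 2), (4, 2), (3, 2), (6, 1), (5, 1), (6, 0), (6, 0), (4, 2)],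
    ![(5, 1), (0, 2), (0, 2), (0, 2), (6, 2), (7, 0), (7, 0), (7, 0)],
    ![(0, 0), (0, 0), (0, 0), (2, 2), (1, 1), (4, 2), (4, 2), (2, 2)],
    ![(1, 0), (1, 0), (3, 1), (1, 0), (1, 0), (4, 2), (4, 1), (6, 2)],
    ![(3, 2), (2, 2), (2, 0), (2, 0), (7, 1), (4, 2), (7, 2), (2, 0)],
    ![(3, 0), (2, 2), (3, 0), (3, 0), (7, 2), (7, 2), (7, 2), (2, 1)],
    ![(1, 1), (4, 0), (3, 2), (1, 1), (4, 0), (4, 0), (5, 2), (4, 1)],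
    ![(3, 2), (3, 2), (3, 2), (6, 1), (5, 0), (5, 0), (5, 0), (6, 1)],
    ![(3, 1), (3, 1), (1, 2), (6, 0), (6, 1), (6, 1), (6, 0), (6, 0)],
    ![(2, 1), (0, 2), (7, 0), (2, 1), (7, 0), (4, 1), (7, 0), (7, 0)]]

/-- Existence of a bandwidth-optimal 3-step, 7-round Allgather on DGX-1 with `C = 6`
chunks per node (bandwidth cost `R/C = 7/6` matches the lower bound `6R ≥ 7C`). -/
theorem dgx1_allgather_three_step_seven_round_exists :
    ∃ (T : Finset (Fin (6 * 8) × Fin 8 × Fin 8 × Fin 3)) (r : Fin 3 → ℕ),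
      ValidAlgo dgx1cap (agPre 6 8) Set.univ T r ∧ ∑ s, r s = 7 := by
  refine ⟨deliveries (Finset.univ.filter (· ∉ agPre 6 8))
    (fun q => (dgx1AllgatherSchedule q.1 q.2).1) (fun q => (dgx1AllgatherSchedule q.1 q.2).2),
    ![2, 2, 3], validAlgo_deliveries ?_ ?_ ?_, rfl⟩
  · decide +kernel
  · exact fun q _ => (em _).imp_right fun h => Finset.mem_filter.2 ⟨Finset.mem_univ q, h⟩
  · decide +kernel
end

section
/- (Existence of the 6-ring bandwidth-optimal Allgather on DGX-1.) There exists a valid algorithm for the Allgather collective with C = 6 chunks per node on the DGX-1 topology with S = 7 steps and round sequence r_s = 1 for all s (total rounds R = 7). One such algorithm runs the ring-Allgather simultaneously on six link-disjoint unidirectional Hamiltonian rings: the cycle 0,1,4,5,6,7,2,3 traversed twice in each direction (using its capacity-2 links) and the cycle 0,2,1,3,6,4,7,5 traversed once in each direction (using its capacity-1 links), with one of the six chunks of each node assigned to each ring. -/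
open Finset Equiv

section PathSends

variable {G P S : ℕ}

def pathSends (pos : Fin G → ℕ → Fin P) : Finset (Fin G × Fin P × Fin P × Fin S) :=
  univ.image fun x : Fin G × Fin S => (x.1, pos x.1 x.2, pos x.1 (x.2 + 1), x.2)

theorem mem_pathSends {pos : Fin G → ℕ → Fin P} {c : Fin G} {n n' : Fin P} {s : Fin S} :
    (c, n, n', s) ∈ pathSends pos ↔ pos c s = n ∧ pos c (s + 1) = n' := by
  simp only [pathSends, mem_image, mem_univ, true_and, Prod.exists, Prod.mk.injEq]
  constructor
  · rintro ⟨c, s, rfl, hn, hn', rfl⟩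
    exact ⟨hn, hn'⟩
  · rintro ⟨hn, hn'⟩
    exact ⟨c, s, rfl, hn, hn', rfl⟩

theorem stepRun_pathSends {pos : Fin G → ℕ → Fin P} {s : ℕ} (hs : s ≤ S) :
    stepRun {q | pos q.1 0 = q.2} (pathSends (S := S) pos) s =
      {q | ∃ t ≤ s, pos q.1 t = q.2} := by
  induction s with
  | zero => simp [stepRun]
  | succ s ih =>
    ext ⟨c, m⟩
    simp only [stepRun, ih (by omega), Set.mem_union, Set.mem_ofPred_eq]
    constructor
    · rintro (⟨t, ht, hm⟩ | ⟨n, -, _, hsend⟩)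
      · exact ⟨t, by omega, hm⟩
      · exact ⟨s + 1, le_rfl, (mem_pathSends.mp hsend).2⟩
    · rintro ⟨t, ht, hm⟩
      rcases Nat.lt_or_eq_of_le ht with ht | rfl
      · exact Or.inl ⟨t, by omega, hm⟩
      · exact Or.inr ⟨pos c s, ⟨s, le_rfl, rfl⟩, hs, mem_pathSends.mpr ⟨rfl, hm⟩⟩

theorem card_filter_pathSends (pos : Fin G → ℕ → Fin P) (n n' : Fin P) (s : Fin S) :
    #((pathSends pos).filter fun x => x.2.1 = n ∧ x.2.2.1 = n' ∧ x.2.2.2 = s) =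
      #{c | pos c s = n ∧ pos c (s + 1) = n'} := by
  symm
  apply card_nbij' (fun c => (c, n, n', s)) Prod.fst
  · intro c hc
    rw [mem_coe, mem_filter_univ] at hc
    simpa [mem_pathSends] using hc
  · rintro ⟨c, m, m', s'⟩ hx
    obtain ⟨⟨hm, hm'⟩, rfl, rfl, rfl⟩ := by simpa [mem_pathSends] using hx
    simpa using ⟨hm, hm'⟩
  · intro c _
    rfl
  · rintro ⟨c, m, m', s'⟩ hx
    obtain ⟨-, rfl, rfl, rfl⟩ := by simpa using hx
    rfl

theorem validAlgo_pathSends (cap : Fin P → Fin P → ℕ) (r : Fin S → ℕ)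
    (pos : Fin G → ℕ → Fin P) (hcover : ∀ c n, ∃ t ≤ S, pos c t = n)
    (hcap : ∀ (s : Fin S) n n', #{c | pos c s = n ∧ pos c (s + 1) = n'} ≤ cap n n' * r s) :
    ValidAlgo cap {q | pos q.1 0 = q.2} Set.univ (pathSends pos) r := by
  refine ⟨fun c n n' s hsend => ?_, fun q _ => ?_, fun s n n' => ?_⟩
  · rw [stepRun_pathSends s.isLt.le]
    exact ⟨s, le_rfl, (mem_pathSends.mp hsend).1⟩
  · rw [stepRun_pathSends le_rfl]
    exact hcover q.1 q.2
  · exact (card_filter_pathSends pos n n' s).trans_le (hcap s n n')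

end PathSends

section Rings

variable {C P : ℕ} (σ : Fin C → Perm (Fin P))

-- Chunk `i + P * k`, i.e. `finProdFinEquiv (k, i)`, starts at node `i` and follows ring `σ k`.
def ringPos (c : Fin (C * P)) (t : ℕ) : Fin P :=
  (σ (finProdFinEquiv.symm c).1 ^ t) (finProdFinEquiv.symm c).2

theorem agPre_eq_ringPos : agPre C P = {q | ringPos σ q.1 0 = q.2} := by
  ext ⟨c, n⟩
  simp [agPre, ringPos, Fin.ext_iff, Fin.modNat]

theorem exists_ringPos_eq (hσ : ∀ k, (σ k).IsCycleOn Set.univ) (c : Fin (C * P)) (n : Fin P) :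
    ∃ t < P, ringPos σ c t = n := by
  have hcyc : (σ (finProdFinEquiv.symm c).1).IsCycleOn (univ : Finset (Fin P)) := by
    simpa using hσ _
  obtain ⟨t, ht, hn⟩ := hcyc.exists_pow_eq (mem_univ (finProdFinEquiv.symm c).2) (mem_univ n)
  exact ⟨t, by simpa using ht, hn⟩

theorem card_ringPos_sends (s : ℕ) (n n' : Fin P) :
    #{c | ringPos σ c s = n ∧ ringPos σ c (s + 1) = n'} = #{k | σ k n = n'} := by
  apply card_nbij' (fun c => (finProdFinEquiv.symm c).1)
    (fun k => finProdFinEquiv (k, (σ k ^ s).symm n))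
  · intro c hc
    rw [mem_coe, mem_filter_univ] at hc
    rw [mem_coe, mem_filter_univ, ← hc.1, ← hc.2]
    simp only [ringPos, pow_succ', Perm.mul_apply]
  · intro k hk
    rw [mem_coe, mem_filter_univ] at hk
    rw [mem_coe, mem_filter_univ]
    simp only [ringPos, Equiv.symm_apply_apply, pow_succ', Perm.mul_apply,
      Equiv.apply_symm_apply, hk, and_self]
  · intro c hc
    rw [mem_coe, mem_filter_univ] at hc
    simp only [← hc.1, ringPos, Equiv.symm_apply_apply, Prod.mk.eta, Equiv.apply_symm_apply]
  · intro k _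
    simp only [Equiv.symm_apply_apply]

theorem validAlgo_rings {S : ℕ} (cap : Fin P → Fin P → ℕ) (hσ : ∀ k, (σ k).IsCycleOn Set.univ)
    (hPS : P ≤ S + 1) (hcap : ∀ n n', #{k | σ k n = n'} ≤ cap n n') :
    ValidAlgo cap (agPre C P) Set.univ (pathSends (S := S) (ringPos σ)) (fun _ => 1) := by
  rw [agPre_eq_ringPos σ]
  refine validAlgo_pathSends cap _ _ (fun c n => ?_) (fun s n n' => ?_)
  · obtain ⟨t, ht, h⟩ := exists_ringPos_eq σ hσ c n
    exact ⟨t, by omega, h⟩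
  · simpa [card_ringPos_sends] using hcap n n'

end Rings

theorem isCycleOn_univ_of_isCycle {α : Type*} {f : Perm α} (hf : f.IsCycle) (h : ∀ x, f x ≠ x) :
    f.IsCycleOn Set.univ := by
  convert hf.isCycleOn
  exact (Set.eq_univ_of_forall h).symm

def dgx1DoubleRing : Perm (Fin 8) := List.formPerm [0, 1, 4, 5, 6, 7, 2, 3]

def dgx1SingleRing : Perm (Fin 8) := List.formPerm [0, 2, 1, 3, 6, 4, 7, 5]

def dgx1Rings : Fin 6 → Perm (Fin 8) :=
  ![dgx1DoubleRing, dgx1DoubleRing, dgx1DoubleRing⁻¹, dgx1DoubleRing⁻¹,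
    dgx1SingleRing, dgx1SingleRing⁻¹]

theorem dgx1Rings_isCycleOn (k : Fin 6) : (dgx1Rings k).IsCycleOn Set.univ := by
  have hD : dgx1DoubleRing.IsCycleOn Set.univ :=
    isCycleOn_univ_of_isCycle (List.isCycle_formPerm (by decide) (by decide)) (by decide)
  have hS : dgx1SingleRing.IsCycleOn Set.univ :=
    isCycleOn_univ_of_isCycle (List.isCycle_formPerm (by decide) (by decide)) (by decide)
  fin_cases k
  exacts [hD, hD, hD.inv, hD.inv, hS, hS.inv]

theorem card_dgx1Rings_le_dgx1cap (n n' : Fin 8) : #{k | dgx1Rings k n = n'} ≤ dgx1cap n n' := by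
  revert n n'
  decide

/-- Existence of the 6-ring bandwidth-optimal Allgather on DGX-1: `C = 6` chunks per node,
`S = 7` steps, one round per step (total rounds `R = 7`). -/
theorem dgx1_allgather_six_ring_exists :
    ∃ T : Finset (Fin (6 * 8) × Fin 8 × Fin 8 × Fin 7),
      ValidAlgo dgx1cap (agPre 6 8) Set.univ T (fun _ => 1) ∧
        (∑ _s : Fin 7, (1 : ℕ)) = 7 :=
  ⟨_, validAlgo_rings dgx1Rings dgx1cap dgx1Rings_isCycleOn le_rfl card_dgx1Rings_le_dgx1cap,
    by simp⟩
end

section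
/- (Correctness of the ring Allgather.) Let P ≥ 2 and consider the unidirectional ring topology cap(n,n′) = 1 if n′ = (n+1) mod P and 0 otherwise. Then the candidate T = {(c, n, (n+1) mod P, s) : 0 ≤ s ≤ P−2, c = (n − s) mod P}, with round sequence r_s = 1 for all s, is a valid algorithm for the Allgather collective with C = 1 chunk per node, having S = P−1 steps and R = P−1 total rounds. -/
lemma modP_big {P x : ℕ} (h : P ≤ x) (h2 : x < 2 * P) : x % P = x - P := by
  rw [Nat.mod_eq_sub_mod h, Nat.mod_eq_of_lt (by omega)]

def ringT (P : ℕ) : Finset (Fin (1 * P) × Fin P × Fin P × Fin (P - 1)) :=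
  Finset.univ.filter fun x =>
    (x.2.2.1 : ℕ) = ((x.2.1 : ℕ) + 1) % P ∧
      (x.1 : ℕ) = ((x.2.1 : ℕ) + P - (x.2.2.2 : ℕ)) % P

lemma mem_ringT {P : ℕ} (c : Fin (1 * P)) (n n' : Fin P) (s : Fin (P - 1)) :
    (c, n, n', s) ∈ ringT P ↔
      (n' : ℕ) = ((n : ℕ) + 1) % P ∧ (c : ℕ) = ((n : ℕ) + P - (s : ℕ)) % P := by
  simp [ringT]

/-- helper: eliminate a variable-modulus `%` by case split -/
lemma modP_cases (P x : ℕ) (hP : 0 < P) (h2 : x < 2 * P) :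
    (x < P ∧ x % P = x) ∨ (P ≤ x ∧ x % P = x - P) := by
  rcases Nat.lt_or_ge x P with h | h
  · exact Or.inl ⟨h, Nat.mod_eq_of_lt h⟩
  · exact Or.inr ⟨h, modP_big h h2⟩

lemma run_eq (P : ℕ) (hP : 2 ≤ P) :
    ∀ s : ℕ, s ≤ P - 1 →
      stepRun (agPre 1 P) (ringT P) s
        = {q | ((q.2 : ℕ) + P - (q.1 : ℕ)) % P ≤ s} := by
  intro s
  induction s with
  | zero =>
    intro _
    ext q
    have hc : (q.1 : ℕ) < P := by have := q.1.isLt; omega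
    have hb : (q.2 : ℕ) < P := q.2.isLt
    simp only [stepRun, agPre, Set.mem_setOf_eq, Nat.mod_eq_of_lt hc]
    rcases modP_cases P ((q.2 : ℕ) + P - (q.1 : ℕ)) (by omega) (by omega) with ⟨h1, h2⟩ | ⟨h1, h2⟩ <;>
      rw [h2] <;> omega
  | succ s ih =>
    intro hs
    have ihs := ih (by omega)
    ext q
    have hc : (q.1 : ℕ) < P := by have := q.1.isLt; omega
    have hb : (q.2 : ℕ) < P := q.2.isLt
    simp only [stepRun, ihs, Set.mem_union, Set.mem_setOf_eq, mem_ringT]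
    constructor
    · rintro (h | ⟨n, hn, hlt, hb', hc'⟩)
      · omega
      · -- q.1 = (n + P - s) % P, q.2 = (n+1) % P ; dist = s+1 ≤ s+1
        have ha : (n : ℕ) < P := n.isLt
        rcases modP_cases P ((n : ℕ) + 1) (by omega) (by omega) with ⟨h1, h2⟩ | ⟨h1, h2⟩ <;>
          rcases modP_cases P ((n : ℕ) + P - s) (by omega) (by omega) with ⟨h3, h4⟩ | ⟨h3, h4⟩ <;>
          rw [h2] at hb' <;> rw [h4] at hc' <;>
          rcases modP_cases P ((q.2 : ℕ) + P - (q.1 : ℕ)) (by omega) (by omega) with ⟨h5, h6⟩ | ⟨h5, h6⟩ <;>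
          rw [h6] <;> omega
    · intro h
      rcases Nat.lt_or_ge (((q.2 : ℕ) + P - (q.1 : ℕ)) % P) (s + 1) with hlt | hge
      · left; omega
      · right
        have hd : ((q.2 : ℕ) + P - (q.1 : ℕ)) % P = s + 1 := by omega
        refine ⟨⟨((q.2 : ℕ) + P - 1) % P, Nat.mod_lt _ (by omega)⟩, ?_, by omega, ?_, ?_⟩
        · -- dist q.1 n ≤ s
          simp only
          rcases modP_cases P ((q.2 : ℕ) + P - 1) (by omega) (by omega) with ⟨h1, h2⟩ | ⟨h1, h2⟩ <;>
            rw [h2] <;>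
            rcases modP_cases P ((q.2 : ℕ) + P - (q.1 : ℕ)) (by omega) (by omega) with ⟨h3, h4⟩ | ⟨h3, h4⟩ <;>
            rw [h4] at hd <;>
            [skip; skip; skip; skip] <;>
            first
            | (rcases modP_cases P (((q.2 : ℕ) + P - 1) + P - (q.1 : ℕ)) (by omega) (by omega) with ⟨h5, h6⟩ | ⟨h5, h6⟩ <;> rw [h6] <;> omega)
            | (rcases modP_cases P (((q.2 : ℕ) + P - 1 - P) + P - (q.1 : ℕ)) (by omega) (by omega) with ⟨h5, h6⟩ | ⟨h5, h6⟩ <;> rw [h6] <;> omega)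
        · -- q.2 = (n+1) % P
          simp only
          rcases modP_cases P ((q.2 : ℕ) + P - 1) (by omega) (by omega) with ⟨h1, h2⟩ | ⟨h1, h2⟩ <;>
            rw [h2] <;>
            first
            | (rcases modP_cases P (((q.2 : ℕ) + P - 1) + 1) (by omega) (by omega) with ⟨h5, h6⟩ | ⟨h5, h6⟩ <;> rw [h6] <;> omega)
            | (rcases modP_cases P (((q.2 : ℕ) + P - 1 - P) + 1) (by omega) (by omega) with ⟨h5, h6⟩ | ⟨h5, h6⟩ <;> rw [h6] <;> omega)
        · -- q.1 = (n + P - s) % P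
          simp only
          rcases modP_cases P ((q.2 : ℕ) + P - (q.1 : ℕ)) (by omega) (by omega) with ⟨h3, h4⟩ | ⟨h3, h4⟩ <;>
            rw [h4] at hd <;>
            rcases modP_cases P ((q.2 : ℕ) + P - 1) (by omega) (by omega) with ⟨h1, h2⟩ | ⟨h1, h2⟩ <;>
            rw [h2] <;>
            first
            | (rcases modP_cases P (((q.2 : ℕ) + P - 1) + P - s) (by omega) (by omega) with ⟨h5, h6⟩ | ⟨h5, h6⟩ <;> rw [h6] <;> omega)
            | (rcases modP_cases P (((q.2 : ℕ) + P - 1 - P) + P - s) (by omega) (by omega) with ⟨h5, h6⟩ | ⟨h5, h6⟩ <;> rw [h6] <;> omega)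


/-- Correctness of the ring Allgather on the unidirectional ring with `P ≥ 2` nodes:
the candidate `T = {(c, n, (n+1) mod P, s) : 0 ≤ s ≤ P−2, c = (n−s) mod P}` with one round
per step is a valid algorithm for Allgather with `C = 1` chunk per node, in `S = P−1`
steps and `R = P−1` total rounds. -/
theorem ring_allgather_correct (P : ℕ) (hP : 2 ≤ P) :
    ValidAlgo (fun n n' : Fin P => if (n' : ℕ) = ((n : ℕ) + 1) % P then 1 else 0)
      (agPre 1 P) Set.univ
      (Finset.univ.filter fun x : Fin (1 * P) × Fin P × Fin P × Fin (P - 1) =>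
        (x.2.2.1 : ℕ) = ((x.2.1 : ℕ) + 1) % P ∧
          (x.1 : ℕ) = ((x.2.1 : ℕ) + P - (x.2.2.2 : ℕ)) % P)
      (fun _ => 1) ∧
    (∑ _s : Fin (P - 1), (1 : ℕ)) = P - 1 := by
  have hT : (Finset.univ.filter fun x : Fin (1 * P) × Fin P × Fin P × Fin (P - 1) =>
        (x.2.2.1 : ℕ) = ((x.2.1 : ℕ) + 1) % P ∧
          (x.1 : ℕ) = ((x.2.1 : ℕ) + P - (x.2.2.2 : ℕ)) % P) = ringT P := rfl
  rw [hT]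
  refine ⟨⟨?_, ?_, ?_⟩, by simp⟩
  · -- sends valid
    intro c n n' s hmem
    rw [mem_ringT] at hmem
    obtain ⟨hn', hc⟩ := hmem
    have hsb : (s : ℕ) ≤ P - 1 := le_of_lt s.isLt
    rw [run_eq P hP (s : ℕ) hsb]
    have ha : (n : ℕ) < P := n.isLt
    have hslt : (s : ℕ) < P - 1 := s.isLt
    simp only [Set.mem_setOf_eq]
    rcases modP_cases P ((n : ℕ) + P - s) (by omega) (by omega) with ⟨h3, h4⟩ | ⟨h3, h4⟩ <;>
      rw [h4] at hc <;>
      rcases modP_cases P ((n : ℕ) + P - (c : ℕ)) (by omega) (by omega) with ⟨h5, h6⟩ | ⟨h5, h6⟩ <;>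
      rw [h6] <;> omega
  · -- post condition
    intro q _
    rw [run_eq P hP (P - 1) le_rfl]
    have hc : (q.1 : ℕ) < P := by have := q.1.isLt; omega
    have := Nat.mod_lt ((q.2 : ℕ) + P - (q.1 : ℕ)) (show 0 < P by omega)
    simp only [Set.mem_setOf_eq]
    omega
  · -- capacity
    intro s n n'
    by_cases h : (n' : ℕ) = ((n : ℕ) + 1) % P
    · simp only [h, if_pos rfl, one_mul]
      apply Finset.card_le_one.mpr
      intro a ha b hb
      obtain ⟨a1, a2, a3, a4⟩ := a
      obtain ⟨b1, b2, b3, b4⟩ := b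
      simp only [ringT, Finset.mem_filter, Finset.mem_univ, true_and] at ha hb
      obtain ⟨⟨_, ha2⟩, ha3, ha4, ha5⟩ := ha
      obtain ⟨⟨_, hb2⟩, hb3, hb4, hb5⟩ := hb
      subst ha3 ha4 ha5 hb3 hb4 hb5
      have h1 : a1 = b1 := Fin.ext (ha2.trans hb2.symm)
      rw [h1]
    · have : (Finset.filter (fun x => x.2.1 = n ∧ x.2.2.1 = n' ∧ x.2.2.2 = s) (ringT P)) = ∅ := by
        apply Finset.filter_eq_empty_iff.mpr
        intro x hx
        simp only [ringT, Finset.mem_filter, Finset.mem_univ, true_and] at hx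
        rintro ⟨h1, h2, h3⟩
        exact h (by rw [← h2, hx.1, h1])
      simp [this, h]
end

section
/- (Pareto-optimality of the 2-step, 3-round DGX-1 Allgather.) Every valid algorithm for the Allgather collective with C ≥ 1 chunks per node on the DGX-1 topology that uses exactly S = 2 steps satisfies 2·R ≥ 3·C for its total rounds R (i.e., no 2-step Allgather on DGX-1 has bandwidth cost R/C below 3/2). -/
/-! Any chunk that starts in a set of nodes `W 0` and ends outside `W S` must cross a link of `L`,
when `W` is closed, step by step, under all links of positive capacity outside `L`. The round
budget of the links in `L` therefore bounds the number of such chunks. On DGX-1, the `3C` chunks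
originating at nodes 5, 6, 7 must all reach node 0, and every 2-step route from there to node 0
crosses one of four capacity-1 links, two per step: hence `3C ≤ 2 (r 0 + r 1)`. -/

section Cut

variable {G P S : ℕ} {cap : Fin P → Fin P → ℕ} {pre post : Set (Fin G × Fin P)}
  {T : Finset (Fin G × Fin P × Fin P × Fin S)} {r : Fin S → ℕ}

def linkSends (T : Finset (Fin G × Fin P × Fin P × Fin S)) (s : Fin S) (n n' : Fin P) :
    Finset (Fin G × Fin P × Fin P × Fin S) :=
  T.filter fun x => x.2.1 = n ∧ x.2.2.1 = n' ∧ x.2.2.2 = s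

theorem ValidAlgo.card_linkSends_le (h : ValidAlgo cap pre post T r) (s : Fin S) (n n' : Fin P) :
    (linkSends T s n n').card ≤ cap n n' * r s :=
  h.2.2 s n n'

theorem ValidAlgo.cap_ne_zero (h : ValidAlgo cap pre post T r) {c : Fin G} {n n' : Fin P}
    {s : Fin S} (hx : (c, n, n', s) ∈ T) : cap n n' ≠ 0 := by
  intro h0
  have hle := h.card_linkSends_le s n n'
  rw [h0, zero_mul, Nat.le_zero, Finset.card_eq_zero] at hle
  have hmem : (c, n, n', s) ∈ linkSends T s n n' := Finset.mem_filter.mpr ⟨hx, rfl, rfl, rfl⟩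
  simp [hle] at hmem

theorem ValidAlgo.card_le_sum_of_forall_sent (h : ValidAlgo cap pre post T r)
    (L : Finset (Fin S × Fin P × Fin P)) (K : Finset (Fin G))
    (hK : ∀ c ∈ K, ∃ l ∈ L, (c, l.2.1, l.2.2, l.1) ∈ T) :
    K.card ≤ ∑ l ∈ L, cap l.2.1 l.2.2 * r l.1 := by
  classical
  have hsub : K ⊆ (L.biUnion fun l => linkSends T l.1 l.2.1 l.2.2).image Prod.fst := by
    intro c hc
    obtain ⟨l, hl, hsend⟩ := hK c hc
    exact Finset.mem_image.mpr
      ⟨_, Finset.mem_biUnion.mpr ⟨l, hl, Finset.mem_filter.mpr ⟨hsend, rfl, rfl, rfl⟩⟩, rfl⟩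
  calc K.card
      ≤ ((L.biUnion fun l => linkSends T l.1 l.2.1 l.2.2).image Prod.fst).card :=
        Finset.card_le_card hsub
    _ ≤ (L.biUnion fun l => linkSends T l.1 l.2.1 l.2.2).card := Finset.card_image_le
    _ ≤ ∑ l ∈ L, (linkSends T l.1 l.2.1 l.2.2).card := Finset.card_biUnion_le
    _ ≤ ∑ l ∈ L, cap l.2.1 l.2.2 * r l.1 :=
        Finset.sum_le_sum fun l _ => h.card_linkSends_le l.1 l.2.1 l.2.2

/-- `W t` is the region a chunk may occupy after `t` steps without having crossed a link of `L`. -/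
def IsClosedOffCut (cap : Fin P → Fin P → ℕ) (L : Finset (Fin S × Fin P × Fin P))
    (W : ℕ → Finset (Fin P)) : Prop :=
  ∀ t : Fin S, W t ⊆ W (t + 1) ∧
    ∀ n n', n ∈ W t → cap n n' ≠ 0 → (t, n, n') ∉ L → n' ∈ W (t + 1)

theorem ValidAlgo.mem_region_or_sent (h : ValidAlgo cap pre post T r)
    {L : Finset (Fin S × Fin P × Fin P)} {W : ℕ → Finset (Fin P)} (hW : IsClosedOffCut cap L W)
    {c : Fin G} (hc : ∀ n, (c, n) ∈ pre → n ∈ W 0) :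
    ∀ {s : ℕ} {m : Fin P}, s ≤ S → (c, m) ∈ stepRun pre T s →
      m ∈ W s ∨ ∃ l ∈ L, (c, l.2.1, l.2.2, l.1) ∈ T
  | 0, m, _, hm => Or.inl (hc m hm)
  | s + 1, m, hs, hm => by
    rcases hm with hm | ⟨n, hn, hlt, hsend⟩
    · exact (h.mem_region_or_sent hW hc (Nat.le_of_succ_le hs) hm).imp_left
        fun hmW => (hW ⟨s, hs⟩).1 hmW
    · rcases h.mem_region_or_sent hW hc (Nat.le_of_succ_le hs) hn with hnW | hsent
      · by_cases hL : ((⟨s, hlt⟩ : Fin S), n, m) ∈ L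
        · exact Or.inr ⟨_, hL, hsend⟩
        · exact Or.inl ((hW ⟨s, hlt⟩).2 n m hnW (h.cap_ne_zero hsend) hL)
      · exact Or.inr hsent

theorem ValidAlgo.card_le_sum_of_isClosedOffCut (h : ValidAlgo cap pre post T r)
    {L : Finset (Fin S × Fin P × Fin P)} {W : ℕ → Finset (Fin P)} (hW : IsClosedOffCut cap L W)
    {m : Fin P} (hm : m ∉ W S) (K : Finset (Fin G)) (hpre : ∀ c ∈ K, ∀ n, (c, n) ∈ pre → n ∈ W 0)
    (hpost : ∀ c ∈ K, (c, m) ∈ post) :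
    K.card ≤ ∑ l ∈ L, cap l.2.1 l.2.2 * r l.1 := by
  refine h.card_le_sum_of_forall_sent L K fun c hc => ?_
  have hrun := h.2.1 (hpost c hc)
  exact (h.mem_region_or_sent hW (hpre c hc) le_rfl hrun).resolve_left fun hmW => hm hmW

end Cut

section Allgather

def agChunksFrom (C P : ℕ) (O : Finset (Fin P)) : Finset (Fin (C * P)) :=
  (Finset.univ ×ˢ O).map finProdFinEquiv.toEmbedding

theorem card_agChunksFrom (C P : ℕ) (O : Finset (Fin P)) :
    (agChunksFrom C P O).card = C * O.card := by
  simp [agChunksFrom]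

theorem mem_of_mem_agChunksFrom_of_mem_agPre {C P : ℕ} {O : Finset (Fin P)} {c : Fin (C * P)}
    (hc : c ∈ agChunksFrom C P O) {n : Fin P} (hn : (c, n) ∈ agPre C P) : n ∈ O := by
  obtain ⟨⟨q, o⟩, hqo, rfl⟩ := Finset.mem_map.mp hc
  have hno : n = o := by
    apply Fin.ext
    rw [← hn]
    simp [finProdFinEquiv, Nat.mod_eq_of_lt o.isLt]
  exact hno ▸ (Finset.mem_product.mp hqo).2

end Allgather

section DGX1

def dgx1Cut : Finset (Fin 2 × Fin 8 × Fin 8) := {(0, 5, 0), (0, 6, 3), (1, 2, 0), (1, 5, 0)}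

def dgx1Region : ℕ → Finset (Fin 8)
  | 0 => {5, 6, 7}
  | 1 => {2, 4, 5, 6, 7}
  | _ => {1, 2, 3, 4, 5, 6, 7}

theorem dgx1Region_isClosedOffCut : IsClosedOffCut dgx1cap dgx1Cut dgx1Region := by
  unfold IsClosedOffCut
  decide

theorem sum_dgx1Cut (r : Fin 2 → ℕ) :
    ∑ l ∈ dgx1Cut, dgx1cap l.2.1 l.2.2 * r l.1 = 2 * ∑ s, r s := by
  obtain ⟨h50, h63, h20⟩ : dgx1cap 5 0 = 1 ∧ dgx1cap 6 3 = 1 ∧ dgx1cap 2 0 = 1 := by decide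
  rw [dgx1Cut, Finset.sum_insert (by decide), Finset.sum_insert (by decide),
    Finset.sum_insert (by decide), Finset.sum_singleton, Fin.sum_univ_two]
  simp only [h50, h63, h20]
  ring

end DGX1

theorem dgx1_allgather_two_step_round_bound_general (C : ℕ)
    (T : Finset (Fin (C * 8) × Fin 8 × Fin 8 × Fin 2)) (r : Fin 2 → ℕ)
    (h : ValidAlgo dgx1cap (agPre C 8) Set.univ T r) :
    3 * C ≤ 2 * ∑ s, r s := by
  have hbound := h.card_le_sum_of_isClosedOffCut dgx1Region_isClosedOffCut (m := 0) (by decide)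
    (agChunksFrom C 8 {5, 6, 7}) (fun _ hc _ hn => mem_of_mem_agChunksFrom_of_mem_agPre hc hn)
    (fun _ _ => Set.mem_univ _)
  rw [card_agChunksFrom, sum_dgx1Cut] at hbound
  simpa [mul_comm] using hbound

/-- Pareto-optimality of the 2-step, 3-round DGX-1 Allgather: every valid 2-step Allgather
algorithm on DGX-1 with `C ≥ 1` chunks per node has total rounds `R` with `2R ≥ 3C`. -/
theorem dgx1_allgather_two_step_round_bound (C : ℕ) (hC : 1 ≤ C)
    (T : Finset (Fin (C * 8) × Fin 8 × Fin 8 × Fin 2)) (r : Fin 2 → ℕ)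
    (h : ValidAlgo dgx1cap (agPre C 8) Set.univ T r) :
    3 * C ≤ 2 * ∑ s, r s :=
  dgx1_allgather_two_step_round_bound_general C T r h
end

section
/- (Bandwidth-optimal DGX-1 Allgather needs at least 3 steps.) Every valid algorithm for the Allgather collective with C ≥ 1 chunks per node on the DGX-1 topology whose total rounds R satisfy 6·R = 7·C (i.e., whose bandwidth cost meets the optimal ratio 7/6) uses at least S ≥ 3 steps. -/
/-- No send can occur over a zero-capacity link. -/
lemma no_send {G S : ℕ} {T : Finset (Fin G × Fin 8 × Fin 8 × Fin S)} {r : Fin S → ℕ}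
    (hcap : ∀ s n n',
      (T.filter fun x => x.2.1 = n ∧ x.2.2.1 = n' ∧ x.2.2.2 = s).card ≤ dgx1cap n n' * r s)
    {c : Fin G} {n n' : Fin 8} {s : Fin S} (h0 : dgx1cap n n' = 0)
    (hT : (c, n, n', s) ∈ T) : False := by
  have h := hcap s n n'
  rw [h0, zero_mul, Nat.le_zero, Finset.card_eq_zero] at h
  have hm : (c, n, n', s) ∈ T.filter fun x => x.2.1 = n ∧ x.2.2.1 = n' ∧ x.2.2.2 = s :=
    Finset.mem_filter.2 ⟨hT, rfl, rfl, rfl⟩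
  rw [h] at hm
  exact absurd hm (Finset.notMem_empty _)

/-- Any set of chunks all sent over a given link at a given step is capacity-bounded. -/
lemma count_bound {G S : ℕ} {T : Finset (Fin G × Fin 8 × Fin 8 × Fin S)} {r : Fin S → ℕ}
    (hcap : ∀ s n n',
      (T.filter fun x => x.2.1 = n ∧ x.2.2.1 = n' ∧ x.2.2.2 = s).card ≤ dgx1cap n n' * r s)
    (n n' : Fin 8) (s : Fin S) (X : Finset (Fin G))
    (hX : ∀ c ∈ X, (c, n, n', s) ∈ T) : X.card ≤ dgx1cap n n' * r s := by
  calc X.card ≤ (T.filter fun x => x.2.1 = n ∧ x.2.2.1 = n' ∧ x.2.2.2 = s).card := by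
        apply Finset.card_le_card_of_injOn (fun c => (c, n, n', s))
        · intro c hc; exact Finset.mem_filter.2 ⟨hX c hc, rfl, rfl, rfl⟩
        · intro a _ b _ hab; exact congrArg Prod.fst hab
    _ ≤ _ := hcap s n n'

/-- There are exactly `C` chunks with a given origin `o < 8`. -/
lemma origin_card (C o : ℕ) (ho : o < 8) :
    (Finset.univ.filter (fun c : Fin (C * 8) => (c : ℕ) % 8 = o)).card = C := by
  have himg : Finset.univ.filter (fun c : Fin (C * 8) => (c : ℕ) % 8 = o) =
      Finset.image (fun k : Fin C => (⟨8 * (k : ℕ) + o, by have := k.isLt; omega⟩ : Fin (C * 8)))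
        Finset.univ := by
    ext c
    simp only [Finset.mem_filter, Finset.mem_image, Finset.mem_univ, true_and]
    constructor
    · intro hmod
      refine ⟨⟨(c : ℕ) / 8, by have := c.isLt; omega⟩, ?_⟩
      apply Fin.ext
      show 8 * ((c : ℕ) / 8) + o = (c : ℕ)
      omega
    · rintro ⟨k, rfl⟩
      show (8 * (k : ℕ) + o) % 8 = o
      omega
  rw [himg, Finset.card_image_of_injective _ ?_, Finset.card_univ, Fintype.card_fin]
  intro a b hab
  simp only [Fin.mk.injEq] at hab
  apply Fin.ext
  omega

/-- Routing lemma: a chunk of origin `o` (at distance 2 from node 0) reaching node 0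
in two steps must relay through `m1` or `m2`. -/
lemma route {C : ℕ} {T : Finset (Fin (C * 8) × Fin 8 × Fin 8 × Fin 2)} {r : Fin 2 → ℕ}
    (hcap : ∀ s n n',
      (T.filter fun x => x.2.1 = n ∧ x.2.2.1 = n' ∧ x.2.2.2 = s).card ≤ dgx1cap n n' * r s)
    (o m1 m2 : Fin 8)
    (hm : ∀ m : Fin 8, dgx1cap m 0 = 0 ∨ dgx1cap o m = 0 ∨ m = m1 ∨ m = m2)
    (ho0 : dgx1cap o 0 = 0) (honz : (o : ℕ) ≠ 0)
    (hom1 : (o : ℕ) ≠ (m1 : ℕ)) (hom2 : (o : ℕ) ≠ (m2 : ℕ))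
    (c : Fin (C * 8)) (hc : (c : ℕ) % 8 = (o : ℕ))
    (hmem : (c, (0 : Fin 8)) ∈ stepRun (agPre C 8) T 2) :
    ((c, o, m1, (0 : Fin 2)) ∈ T ∧ (c, m1, 0, (1 : Fin 2)) ∈ T) ∨
    ((c, o, m2, (0 : Fin 2)) ∈ T ∧ (c, m2, 0, (1 : Fin 2)) ∈ T) := by
  have e : stepRun (agPre C 8) T 2 = stepRun (agPre C 8) T 1 ∪
      {q | ∃ n, (q.1, n) ∈ stepRun (agPre C 8) T 1 ∧ ∃ h : 1 < 2, (q.1, n, q.2, ⟨1, h⟩) ∈ T} :=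
    rfl
  have e1 : stepRun (agPre C 8) T 1 = agPre C 8 ∪
      {q | ∃ n, (q.1, n) ∈ agPre C 8 ∧ ∃ h : 0 < 2, (q.1, n, q.2, ⟨0, h⟩) ∈ T} := rfl
  rw [e, e1] at hmem
  -- helper: membership in agPre at node n forces n = o
  have hpre_eq : ∀ n : Fin 8, (c, n) ∈ agPre C 8 → n = o := by
    intro n hn
    have : (c : ℕ) % 8 = (n : ℕ) := hn
    exact Fin.ext (by omega)
  rcases hmem with (hp | ⟨n, hn, _, hsend⟩) | ⟨m, hm1, h1, hsend⟩
  · -- (c,0) ∈ pre : impossible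
    have : (c : ℕ) % 8 = ((0 : Fin 8) : ℕ) := hp
    simp at this; omega
  · -- direct send o → 0 at step 0 : zero capacity
    have hn4 := hpre_eq n hn; subst hn4
    exact absurd hsend (fun hs => no_send hcap ho0 hs)
  · -- relay through m at step 1
    have hs1 : (c, m, (0 : Fin 8), (1 : Fin 2)) ∈ T := hsend
    rcases hm m with h0 | h0 | hmm | hmm
    · exact absurd hs1 (fun hs => no_send hcap h0 hs)
    · -- dgx1cap o m = 0: chunk can't be at m after step 1
      exfalso
      rcases hm1 with hp | ⟨n, hn, _, hs0⟩
      · have hmo := hpre_eq m hp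
        rw [hmo] at hs1
        exact no_send hcap ho0 hs1
      · have hn4 := hpre_eq n hn
        rw [hn4] at hs0
        exact no_send hcap h0 hs0
    · -- m = m1
      left
      rw [hmm] at hm1 hs1
      rcases hm1 with hp | ⟨n, hn, _, hs0⟩
      · have h := hpre_eq m1 hp
        exact absurd (congrArg Fin.val h) (Ne.symm hom1)
      · have hn4 := hpre_eq n hn
        rw [hn4] at hs0
        exact ⟨hs0, hs1⟩
    · -- m = m2
      right
      rw [hmm] at hm1 hs1
      rcases hm1 with hp | ⟨n, hn, _, hs0⟩
      · have h := hpre_eq m2 hp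
        exact absurd (congrArg Fin.val h) (Ne.symm hom2)
      · have hn4 := hpre_eq n hn
        rw [hn4] at hs0
        exact ⟨hs0, hs1⟩

/-- A bandwidth-optimal DGX-1 Allgather needs at least 3 steps: if the total rounds `R`
satisfy `6R = 7C` then `S ≥ 3`. -/
theorem dgx1_allgather_bandwidth_optimal_steps (C : ℕ) (hC : 1 ≤ C) (S : ℕ)
    (T : Finset (Fin (C * 8) × Fin 8 × Fin 8 × Fin S)) (r : Fin S → ℕ)
    (h : ValidAlgo dgx1cap (agPre C 8) Set.univ T r)
    (hbw : 6 * ∑ s, r s = 7 * C) :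
    3 ≤ S := by
  by_contra h3
  push_neg at h3
  obtain ⟨-, hpost, hcap⟩ := h
  interval_cases S
  · -- S = 0
    simp at hbw; omega
  · -- S = 1
    have hc4 : (4 : ℕ) < C * 8 := by omega
    have hmem := hpost (Set.mem_univ ((⟨4, hc4⟩ : Fin (C * 8)), (0 : Fin 8)))
    have e1 : stepRun (agPre C 8) T 1 = agPre C 8 ∪
        {q | ∃ n, (q.1, n) ∈ agPre C 8 ∧ ∃ h : 0 < 1, (q.1, n, q.2, ⟨0, h⟩) ∈ T} := rfl
    rw [e1] at hmem
    rcases hmem with hp | ⟨n, hn, _, hsend⟩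
    · have : (4 : ℕ) % 8 = ((0 : Fin 8) : ℕ) := hp
      simp at this
    · have hval : (4 : ℕ) % 8 = (n : ℕ) := hn
      have hn4 : n = (4 : Fin 8) := Fin.ext (by omega)
      subst hn4
      exact no_send hcap (by decide : dgx1cap 4 0 = 0) hsend
  · -- S = 2
    have hsum : ∑ s, r s = r 0 + r 1 := Fin.sum_univ_two r
    rw [hsum] at hbw
    -- the six relay sets
    set A4 := Finset.univ.filter (fun c : Fin (C * 8) =>
      (c : ℕ) % 8 = 4 ∧ (c, (4:Fin 8), (1:Fin 8), (0:Fin 2)) ∈ T ∧ (c, (1:Fin 8), (0:Fin 8), (1:Fin 2)) ∈ T) with hA4def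
    set B4 := Finset.univ.filter (fun c : Fin (C * 8) =>
      (c : ℕ) % 8 = 4 ∧ (c, (4:Fin 8), (5:Fin 8), (0:Fin 2)) ∈ T ∧ (c, (5:Fin 8), (0:Fin 8), (1:Fin 2)) ∈ T) with hB4def
    set A6 := Finset.univ.filter (fun c : Fin (C * 8) =>
      (c : ℕ) % 8 = 6 ∧ (c, (6:Fin 8), (3:Fin 8), (0:Fin 2)) ∈ T ∧ (c, (3:Fin 8), (0:Fin 8), (1:Fin 2)) ∈ T) with hA6def
    set B6 := Finset.univ.filter (fun c : Fin (C * 8) =>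
      (c : ℕ) % 8 = 6 ∧ (c, (6:Fin 8), (5:Fin 8), (0:Fin 2)) ∈ T ∧ (c, (5:Fin 8), (0:Fin 8), (1:Fin 2)) ∈ T) with hB6def
    set A7 := Finset.univ.filter (fun c : Fin (C * 8) =>
      (c : ℕ) % 8 = 7 ∧ (c, (7:Fin 8), (2:Fin 8), (0:Fin 2)) ∈ T ∧ (c, (2:Fin 8), (0:Fin 8), (1:Fin 2)) ∈ T) with hA7def
    set B7 := Finset.univ.filter (fun c : Fin (C * 8) =>
      (c : ℕ) % 8 = 7 ∧ (c, (7:Fin 8), (5:Fin 8), (0:Fin 2)) ∈ T ∧ (c, (5:Fin 8), (0:Fin 8), (1:Fin 2)) ∈ T) with hB7def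
    -- coverage: C ≤ |A_o| + |B_o| for o = 4, 6, 7
    have cover : ∀ (o m1 : Fin 8) (A B : Finset (Fin (C * 8))),
        (∀ m : Fin 8, dgx1cap m 0 = 0 ∨ dgx1cap o m = 0 ∨ m = m1 ∨ m = 5) →
        dgx1cap o 0 = 0 → (o : ℕ) ≠ 0 → (o : ℕ) ≠ (m1 : ℕ) → (o : ℕ) ≠ 5 →
        (A = Finset.univ.filter (fun c : Fin (C * 8) =>
          (c : ℕ) % 8 = (o : ℕ) ∧ (c, o, m1, (0:Fin 2)) ∈ T ∧ (c, m1, (0:Fin 8), (1:Fin 2)) ∈ T)) →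
        (B = Finset.univ.filter (fun c : Fin (C * 8) =>
          (c : ℕ) % 8 = (o : ℕ) ∧ (c, o, (5:Fin 8), (0:Fin 2)) ∈ T ∧ (c, (5:Fin 8), (0:Fin 8), (1:Fin 2)) ∈ T)) →
        C ≤ A.card + B.card := by
      intro o m1 A B hm ho0 honz hom1 hom2 hA hB
      have hsub : Finset.univ.filter (fun c : Fin (C * 8) => (c : ℕ) % 8 = (o : ℕ))
          ⊆ A ∪ B := by
        intro c hc
        have hco : (c : ℕ) % 8 = (o : ℕ) := (Finset.mem_filter.1 hc).2
        have hmem := hpost (Set.mem_univ (c, (0 : Fin 8)))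
        rcases route hcap o m1 5 hm ho0 honz hom1 (by simpa using hom2) c hco hmem with
          ⟨h1, h2⟩ | ⟨h1, h2⟩
        · apply Finset.mem_union_left
          rw [hA]
          exact Finset.mem_filter.2 ⟨Finset.mem_univ _, hco, h1, h2⟩
        · apply Finset.mem_union_right
          rw [hB]
          exact Finset.mem_filter.2 ⟨Finset.mem_univ _, hco, h1, h2⟩
      calc C = (Finset.univ.filter
              (fun c : Fin (C * 8) => (c : ℕ) % 8 = (o : ℕ))).card := (origin_card C o o.isLt).symm
        _ ≤ (A ∪ B).card := Finset.card_le_card hsub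
        _ ≤ A.card + B.card := Finset.card_union_le _ _
    have hcov4 : C ≤ A4.card + B4.card :=
      cover 4 1 A4 B4 (by decide) (by decide) (by decide) (by decide) (by decide) hA4def hB4def
    have hcov6 : C ≤ A6.card + B6.card :=
      cover 6 3 A6 B6 (by decide) (by decide) (by decide) (by decide) (by decide) hA6def hB6def
    have hcov7 : C ≤ A7.card + B7.card :=
      cover 7 2 A7 B7 (by decide) (by decide) (by decide) (by decide) (by decide) hA7def hB7def
    -- capacity bounds
    have hA4a : A4.card ≤ 2 * r 0 := by
      have := count_bound hcap 4 1 0 A4 (fun c hc => ((Finset.mem_filter.1 hc).2).2.1)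
      simpa [show dgx1cap 4 1 = 2 from by decide] using this
    have hA4b : A4.card ≤ 2 * r 1 := by
      have := count_bound hcap 1 0 1 A4 (fun c hc => ((Finset.mem_filter.1 hc).2).2.2)
      simpa [show dgx1cap 1 0 = 2 from by decide] using this
    have hA6a : A6.card ≤ 1 * r 0 := by
      have := count_bound hcap 6 3 0 A6 (fun c hc => ((Finset.mem_filter.1 hc).2).2.1)
      simpa [show dgx1cap 6 3 = 1 from by decide] using this
    have hA6b : A6.card ≤ 2 * r 1 := by
      have := count_bound hcap 3 0 1 A6 (fun c hc => ((Finset.mem_filter.1 hc).2).2.2)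
      simpa [show dgx1cap 3 0 = 2 from by decide] using this
    have hA7a : A7.card ≤ 2 * r 0 := by
      have := count_bound hcap 7 2 0 A7 (fun c hc => ((Finset.mem_filter.1 hc).2).2.1)
      simpa [show dgx1cap 7 2 = 2 from by decide] using this
    have hA7b : A7.card ≤ 1 * r 1 := by
      have := count_bound hcap 2 0 1 A7 (fun c hc => ((Finset.mem_filter.1 hc).2).2.2)
      simpa [show dgx1cap 2 0 = 1 from by decide] using this
    -- the three B sets are disjoint and all route through the unit-capacity edge 5 → 0
    have hd46 : Disjoint B4 B6 := by
      rw [Finset.disjoint_left]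
      intro c h4 h6
      have := (Finset.mem_filter.1 h4).2.1
      have := (Finset.mem_filter.1 h6).2.1
      omega
    have hd47 : Disjoint (B4 ∪ B6) B7 := by
      rw [Finset.disjoint_left]
      intro c h46 h7
      have h7' := (Finset.mem_filter.1 h7).2.1
      rcases Finset.mem_union.1 h46 with h | h
      · have := (Finset.mem_filter.1 h).2.1; omega
      · have := (Finset.mem_filter.1 h).2.1; omega
    have hBsum : B4.card + B6.card + B7.card ≤ 1 * r 1 := by
      have hcard : (B4 ∪ B6 ∪ B7).card = B4.card + B6.card + B7.card := by
        rw [Finset.card_union_of_disjoint hd47, Finset.card_union_of_disjoint hd46]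
      have := count_bound hcap 5 0 1 (B4 ∪ B6 ∪ B7) (by
        intro c hc
        rcases Finset.mem_union.1 hc with h | h
        · rcases Finset.mem_union.1 h with h | h
          · exact ((Finset.mem_filter.1 h).2).2.2
          · exact ((Finset.mem_filter.1 h).2).2.2
        · exact ((Finset.mem_filter.1 h).2).2.2)
      rw [hcard] at this
      simpa [show dgx1cap 5 0 = 1 from by decide] using this
    omega
end
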